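/- arXiv:0801.1717 — 7 statements merged into one kernel-verified Lean document; each statement's English description precedes it below -/
import Mathlib

section
/- (Christensen's theorem) Let Y be a separable metrizable space. Then Y is completely metrizable if and only if there exist a Polish space X and a map F : K(X) → K(Y) such that (1) F is monotone, and (2) for each compact L ⊆ Y there is a compact K ⊆ X with L ⊆ F(K). -/
open Set Filter Topology

universe u v

/-- A subset `A` of `Y` is bounded: every continuous real-valued function on `Y`
is bounded on `A`. -/
def BoundedSubset {Y : Type v} [TopologicalSpace Y] (A : Set Y) : Prop :=
  ∀ f : Y → ℝ, Continuous f → ∃ M : ℝ, ∀ a ∈ A, |f a| ≤ M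

/-- A μ-space (μ-complete space): every closed bounded subset is compact. -/
def MuSpace (Y : Type v) [TopologicalSpace Y] : Prop :=
  ∀ A : Set Y, IsClosed A → BoundedSubset A → IsCompact A

/-- A q-space: every point has a sequence of neighborhoods such that any choice of
points from them has a cluster point. -/
def QSpace (Y : Type v) [TopologicalSpace Y] : Prop :=
  ∀ y : Y, ∃ U : ℕ → Set Y, (∀ n, U n ∈ nhds y) ∧
    ∀ z : ℕ → Y, (∀ n, z n ∈ U n) → ∃ p : Y, MapClusterPt p atTop z

/-- A wq-space: every point has a sequence of neighborhoods such that any choice of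
points from them forms a bounded set. -/
def WqSpace (Y : Type v) [TopologicalSpace Y] : Prop :=
  ∀ y : Y, ∃ U : ℕ → Set Y, (∀ n, U n ∈ nhds y) ∧
    ∀ z : ℕ → Y, (∀ n, z n ∈ U n) → BoundedSubset (Set.range z)

/-- Condition (1): `F` is monotone on compact sets. -/
def CondMonotone {X : Type u} {Y : Type v} [TopologicalSpace X] [TopologicalSpace Y]
    (F : Set X → Set Y) : Prop :=
  ∀ K L : Set X, IsCompact K → IsCompact L → K ⊆ L → F K ⊆ F L

/-- Condition (2): cofinality. -/
def CondCofinal {X : Type u} {Y : Type v} [TopologicalSpace X] [TopologicalSpace Y]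
    (F : Set X → Set Y) : Prop :=
  ∀ L : Set Y, IsCompact L → ∃ K : Set X, IsCompact K ∧ L ⊆ F K

/-- Condition (2)_c: countable cofinality. -/
def CondCofinalCtble {X : Type u} {Y : Type v} [TopologicalSpace X] [TopologicalSpace Y]
    (F : Set X → Set Y) : Prop :=
  ∀ L : Set Y, IsCompact L → L.Countable → ∃ K : Set X, IsCompact K ∧ L ⊆ F K

/-- Condition (3)_c. -/
def Cond3c {X : Type u} {Y : Type v} [TopologicalSpace X] [TopologicalSpace Y]
    (F : Set X → Set Y) : Prop :=
  ∀ (U : Set X) (V : Set Y), IsOpen U → IsOpen V → U.Nonempty → V.Nonempty →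
    (∀ L : Set Y, IsCompact L → L.Countable → L ⊆ V →
      ∃ K : Set X, IsCompact K ∧ K ⊆ U ∧ L ⊆ F K) →
    ∀ W : Set (Set X), (∀ w ∈ W, IsOpen w) → U ⊆ ⋃₀ W →
      ∀ y ∈ V, ∃ E : Set (Set X), E ⊆ W ∧ E.Finite ∧
        ∃ Vy ∈ nhds y, ∀ L : Set Y, IsCompact L → L.Countable → L ⊆ Vy →
          ∃ K : Set X, IsCompact K ∧ K ⊆ ⋃₀ E ∧ L ⊆ F K

/-- Condition (3). -/
def Cond3 {X : Type u} {Y : Type v} [TopologicalSpace X] [TopologicalSpace Y]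
    (F : Set X → Set Y) : Prop :=
  ∀ (U : Set X) (V : Set Y), IsOpen U → IsOpen V → U.Nonempty → V.Nonempty →
    (∀ L : Set Y, IsCompact L → L ⊆ V →
      ∃ K : Set X, IsCompact K ∧ K ⊆ U ∧ L ⊆ F K) →
    ∀ W : Set (Set X), (∀ w ∈ W, IsOpen w) → U ⊆ ⋃₀ W →
      ∀ y ∈ V, ∃ E : Set (Set X), E ⊆ W ∧ E.Finite ∧
        ∃ Vy ∈ nhds y, ∀ L : Set Y, IsCompact L → L ⊆ Vy →
          ∃ K : Set X, IsCompact K ∧ K ⊆ ⋃₀ E ∧ L ⊆ F K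

/-- Condition (3'). -/
def Cond3' {X : Type u} {Y : Type v} [TopologicalSpace X] [TopologicalSpace Y]
    (F : Set X → Set Y) : Prop :=
  ∀ W : Set (Set X), (∀ w ∈ W, IsOpen w) → ⋃₀ W = Set.univ →
    ∀ y : Y, ∃ E : Set (Set X), E ⊆ W ∧ E.Finite ∧
      ∃ Vy ∈ nhds y, ∀ L : Set Y, IsCompact L → L ⊆ Vy →
        ∃ K : Set X, IsCompact K ∧ K ⊆ ⋃₀ E ∧ L ⊆ F K

/-- `F : S(X) → 2^Y` is set tri-quotient: there is an assignment `s` of open subsets of `Y`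
to open subsets of `X` satisfying (str1)-(str4). -/
def SetTriQuotient {X : Type u} {Y : Type v} [TopologicalSpace X] [TopologicalSpace Y]
    (S : Set (Set X)) (F : Set X → Set Y) : Prop :=
  ∃ s : Set X → Set Y,
    (∀ U : Set X, IsOpen U → IsOpen (s U)) ∧
    (∀ U : Set X, IsOpen U → s U ⊆ ⋃ K ∈ {K | K ∈ S ∧ K ⊆ U}, F K) ∧
    s Set.univ = Set.univ ∧
    (∀ U V : Set X, IsOpen U → IsOpen V → U ⊆ V → s U ⊆ s V) ∧
    (∀ U : Set X, IsOpen U → ∀ y ∈ s U, ∀ W : Set (Set X), (∀ w ∈ W, IsOpen w) →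
      (⋃ K ∈ {K | K ∈ S ∧ y ∈ F K ∧ K ⊆ U}, K) ⊆ ⋃₀ W →
      ∃ E : Set (Set X), E ⊆ W ∧ E.Finite ∧ y ∈ s (⋃₀ E))

/-- A sieve on `X`: a sequence of open covers indexed by `A n`, linked by maps `π n`. -/
def IsSieve {X : Type u} [TopologicalSpace X] {A : ℕ → Type v}
    (U : ∀ n, A n → Set X) (π : ∀ n, A (n + 1) → A n) : Prop :=
  (∀ n (a : A n), IsOpen (U n a)) ∧
  (∀ n, (⋃ a : A n, U n a) = Set.univ) ∧
  (∀ n (a : A n), U n a = ⋃ b ∈ {b : A (n + 1) | π n b = a}, U (n + 1) b)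

/-- A π-chain for a sieve. -/
def IsPiChain {A : ℕ → Type v} (π : ∀ n, A (n + 1) → A n) (α : ∀ n, A n) : Prop :=
  ∀ n, π n (α (n + 1)) = α n

/-- A filter base on `X`. -/
def IsFilterBase {X : Type u} (B : Set (Set X)) : Prop :=
  B.Nonempty ∧ (∀ P ∈ B, P.Nonempty) ∧ ∀ P ∈ B, ∀ Q ∈ B, ∃ R ∈ B, R ⊆ P ∩ Q

/-- A complete sieve: for every π-chain, every filter base meshing with the chain
has a cluster point. -/
def IsCompleteSieve {X : Type u} [TopologicalSpace X] {A : ℕ → Type v}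
    (U : ∀ n, A n → Set X) (π : ∀ n, A (n + 1) → A n) : Prop :=
  IsSieve U π ∧
  ∀ α : ∀ n, A n, IsPiChain π α →
    ∀ B : Set (Set X), IsFilterBase B →
      (∀ P ∈ B, ∀ n, (P ∩ U n (α n)).Nonempty) →
      ∃ x : X, ∀ P ∈ B, x ∈ closure P

/-- A finitely additive sieve. -/
def IsFinitelyAdditiveSieve {X : Type u} [TopologicalSpace X] {A : ℕ → Type v}
    (U : ∀ n, A n → Set X) (π : ∀ n, A (n + 1) → A n) : Prop :=
  (∀ n (a b : A n), ∃ c : A n, U n c = U n a ∪ U n b) ∧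
  (∀ n (a : A n) (b b' : A (n + 1)), π n b = a → π n b' = a →
    ∃ c : A (n + 1), π n c = a ∧ U (n + 1) c = U (n + 1) b ∪ U (n + 1) b')

/-- A strong sieve. -/
def IsStrongSieve {X : Type u} [TopologicalSpace X] {A : ℕ → Type v}
    (U : ∀ n, A n → Set X) (π : ∀ n, A (n + 1) → A n) : Prop :=
  ∀ n (b : A (n + 1)), closure (U (n + 1) b) ⊆ U n (π n b)

/-- A sieve-complete space: one admitting a complete sieve. -/
def SieveComplete (X : Type u) [TopologicalSpace X] : Prop :=
  ∃ (A : ℕ → Type u) (U : ∀ n, A n → Set X) (π : ∀ n, A (n + 1) → A n),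
    IsCompleteSieve U π

/-- The hyperspace of compact subsets of `X`. -/
def KSet (X : Type u) [TopologicalSpace X] : Type u := {K : Set X // IsCompact K}

/-- The upper Vietoris topology on the hyperspace of compact sets. -/
def upperVietoris (X : Type u) [TopologicalSpace X] : TopologicalSpace (KSet X) :=
  TopologicalSpace.generateFrom
    {S : Set (KSet X) | ∃ U : Set X, IsOpen U ∧ S = {K : KSet X | K.1 ⊆ U}}

/-- An usco map: nonempty compact values and upper semicontinuous. -/
def IsUsco {Z : Type u} {Y : Type v} [TopologicalSpace Z] [TopologicalSpace Y]
    (Φ : Z → Set Y) : Prop :=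
  (∀ z, (Φ z).Nonempty) ∧ (∀ z, IsCompact (Φ z)) ∧
  ∀ z : Z, ∀ V : Set Y, IsOpen V → Φ z ⊆ V → ∃ O ∈ nhds z, ∀ z' ∈ O, Φ z' ⊆ V

/-- A wq-map. -/
def WqMap {Z : Type u} {Y : Type v} [TopologicalSpace Z] [TopologicalSpace Y]
    (F : Z → Set Y) : Prop :=
  ∀ z : Z, ∃ U : ℕ → Set Z, (∀ n, U n ∈ nhds z) ∧
    ∀ w : ℕ → Z, (∀ n, w n ∈ U n) → IsCompact (closure (⋃ n, F (w n)))

/-- `A ⊆ Y` is `F`-covered by `B ⊆ X`. -/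
def FCovered {X : Type u} {Y : Type v} [TopologicalSpace X] [TopologicalSpace Y]
    (F : Set X → Set Y) (A : Set Y) (B : Set X) : Prop :=
  ∀ L : Set Y, IsCompact L → L ⊆ A → ∃ K : Set X, IsCompact K ∧ K ⊆ B ∧ L ⊆ F K

/-- The Lindelöf number of a space. -/
noncomputable def lindelofNumber (X : Type u) [TopologicalSpace X] : Cardinal.{u} :=
  sInf {κ : Cardinal.{u} | Cardinal.aleph0 ≤ κ ∧
    ∀ 𝒰 : Set (Set X), (∀ U ∈ 𝒰, IsOpen U) → ⋃₀ 𝒰 = Set.univ →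
      ∃ 𝒱 : Set (Set X), 𝒱 ⊆ 𝒰 ∧ Cardinal.mk 𝒱 ≤ κ ∧ ⋃₀ 𝒱 = Set.univ}

/-- The density of a space: the least cardinality of a dense subset. -/
noncomputable def densityCard (X : Type u) [TopologicalSpace X] : Cardinal.{u} :=
  sInf {κ : Cardinal.{u} | ∃ D : Set X, Dense D ∧ Cardinal.mk D = κ}

/-- Čech-completeness: `X` is a Gδ subset of its Stone–Čech compactification. -/
def CechComplete (X : Type u) [TopologicalSpace X] : Prop :=
  ∃ G : ℕ → Set (StoneCech X), (∀ n, IsOpen (G n)) ∧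
    Set.range (stoneCechUnit : X → StoneCech X) = ⋂ n, G n

/-- Complete metrizability of a topological space. -/
def CompletelyMetrizable (X : Type u) [t : TopologicalSpace X] : Prop :=
  ∃ m : MetricSpace X, m.toPseudoMetricSpace.toUniformSpace.toTopologicalSpace = t ∧
    @CompleteSpace X m.toPseudoMetricSpace.toUniformSpace

/-- A generalized tri-quotient set-valued map. -/
def GenTriQuotient {X : Type u} {Y : Type v} [TopologicalSpace X] [TopologicalSpace Y]
    (F : X → Set Y) : Prop :=
  ∃ t : Set X → Set Y,
    (∀ U : Set X, IsOpen U → IsOpen (t U)) ∧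
    (∀ U : Set X, IsOpen U → t U ⊆ ⋃ x ∈ U, F x) ∧
    t Set.univ = Set.univ ∧
    (∀ U V : Set X, IsOpen U → IsOpen V → U ⊆ V → t U ⊆ t V) ∧
    (∀ U : Set X, IsOpen U → ∀ y ∈ t U, ∀ W : Set (Set X), (∀ w ∈ W, IsOpen w) →
      {x ∈ U | y ∈ F x} ⊆ ⋃₀ W →
      ∃ E : Set (Set X), E ⊆ W ∧ E.Finite ∧ y ∈ t (⋃₀ E))

/-- A (single-valued, continuous) tri-quotient map. -/
def TriQuotient {X : Type u} {Y : Type v} [TopologicalSpace X] [TopologicalSpace Y]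
    (f : X → Y) : Prop :=
  Continuous f ∧ Function.Surjective f ∧
  ∃ t : Set X → Set Y,
    (∀ U : Set X, IsOpen U → IsOpen (t U)) ∧
    (∀ U : Set X, IsOpen U → t U ⊆ f '' U) ∧
    t Set.univ = Set.univ ∧
    (∀ U V : Set X, IsOpen U → IsOpen V → U ⊆ V → t U ⊆ t V) ∧
    (∀ U : Set X, IsOpen U → ∀ y ∈ t U, ∀ W : Set (Set X), (∀ w ∈ W, IsOpen w) →
      f ⁻¹' {y} ∩ U ⊆ ⋃₀ W →
      ∃ E : Set (Set X), E ⊆ W ∧ E.Finite ∧ y ∈ t (⋃₀ E))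

/-- The topology of pointwise convergence on `C(Y, F)`. -/
def CpTopology (Y F : Type*) [TopologicalSpace Y] [TopologicalSpace F] :
    TopologicalSpace C(Y, F) :=
  TopologicalSpace.induced (fun (f : C(Y, F)) (y : Y) => f y) Pi.topologicalSpace


namespace Chris

open Metric

variable {X : Type u} {Z : Type v} [MetricSpace X] [MetricSpace Z]

/-- Closed `ε`-thickening of a set. -/
def thick (ε : ℝ) (A : Set X) : Set X := {x | ∃ a ∈ A, dist x a ≤ ε}

theorem subset_thick {ε : ℝ} (hε : 0 ≤ ε) (A : Set X) : A ⊆ thick ε A :=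
  fun x hx => ⟨x, hx, by simpa using hε⟩

theorem thick_mono {A B : Set X} (h : A ⊆ B) {ε δ : ℝ} (hε : ε ≤ δ) :
    thick ε A ⊆ thick δ B := by
  rintro x ⟨a, ha, hd⟩; exact ⟨a, h ha, hd.trans hε⟩

theorem thick_comp {A B : Set X} {ε δ : ℝ} (h : A ⊆ thick ε B) :
    thick δ A ⊆ thick (δ + ε) B := by
  rintro x ⟨a, ha, hd⟩
  obtain ⟨b, hb, hd'⟩ := h ha
  exact ⟨b, hb, (dist_triangle x a b).trans (add_le_add hd hd')⟩

/-- The context for Christensen's theorem: `Y ⊆ Z`, a monotone cofinal compact-valued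
map `F` from compact subsets of `X`, and a countable dense subset `D ⊆ X`. -/
structure Ctx (X : Type u) (Z : Type v) [MetricSpace X] [MetricSpace Z] where
  Y : Set Z
  F : Set X → Set Z
  D : Set X
  hD : D.Countable
  hDd : Dense D
  hFY : ∀ K : Set X, IsCompact K → F K ⊆ Y
  hFc : ∀ K : Set X, IsCompact K → IsCompact (F K)
  hmono : ∀ K L : Set X, IsCompact K → IsCompact L → K ⊆ L → F K ⊆ F L
  hcof : ∀ L : Set Z, IsCompact L → L ⊆ Y → ∃ K : Set X, IsCompact K ∧ L ⊆ F K

variable (c : Ctx X Z)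

/-- `(V, K)` is a good pair at scale `ε`. -/
def Gd (V : Set Z) (K : Set X) (ε : ℝ) : Prop :=
  IsCompact K ∧ ∀ L : Set Z, IsCompact L → L ⊆ V ∩ c.Y →
    ∃ K', IsCompact K' ∧ K ⊆ K' ∧ K' ⊆ thick ε K ∧ L ⊆ c.F K'

theorem gd_mono {V V' : Set Z} {K : Set X} {ε : ℝ} (h : V' ⊆ V) (hgd : Gd c V K ε) :
    Gd c V' K ε :=
  ⟨hgd.1, fun L hL hLs => hgd.2 L hL (hLs.trans (Set.inter_subset_inter_left _ h))⟩

theorem gd_empty {K : Set X} {ε : ℝ} (hK : IsCompact K) (hε : 0 ≤ ε) : Gd c ∅ K ε := by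
  refine ⟨hK, fun L _ hLs => ⟨K, hK, subset_rfl, subset_thick hε K, ?_⟩⟩
  have : L = ∅ := Set.subset_empty_iff.1 (hLs.trans (Set.empty_inter _).subset)
  simp [this]

theorem net {K D : Set X} (hK : IsCompact K) (hD : Dense D) {η : ℝ} (hη : 0 < η) :
    ∃ H : Set X, H ⊆ D ∧ H.Finite ∧ (∀ h ∈ H, ∃ x ∈ K, dist h x ≤ η) ∧
      ∀ x ∈ K, ∃ h ∈ H, dist x h < η := by
  classical
  have hcov : K ⊆ ⋃ x ∈ K, ball x (η / 2) := fun x hx =>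
    Set.mem_biUnion hx (mem_ball_self (half_pos hη))
  obtain ⟨t, htK, htf, htcov⟩ :=
    hK.elim_finite_subcover_image (fun x _ => isOpen_ball) hcov
  have hsel : ∀ x : X, ∃ d : X, x ∈ t → d ∈ D ∧ dist d x < η / 2 := by
    intro x
    by_cases hx : x ∈ t
    · obtain ⟨d, hdD, hdb⟩ := hD.exists_mem_open isOpen_ball ⟨x, mem_ball_self (half_pos hη)⟩
      exact ⟨d, fun _ => ⟨hdD, mem_ball.1 hdb⟩⟩
    · exact ⟨x, fun h => absurd h hx⟩
  choose φ hφ using hsel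
  refine ⟨φ '' t, ?_, htf.image φ, ?_, ?_⟩
  · rintro h ⟨x, hx, rfl⟩; exact (hφ x hx).1
  · rintro h ⟨x, hx, rfl⟩
    exact ⟨x, htK hx, ((hφ x hx).2.le).trans (half_le_self hη.le)⟩
  · intro x hx
    obtain ⟨y, hy, hxy⟩ := Set.mem_iUnion₂.1 (htcov hx)
    refine ⟨φ y, Set.mem_image_of_mem φ hy, ?_⟩
    calc dist x (φ y) ≤ dist x y + dist y (φ y) := dist_triangle _ _ _
      _ < η / 2 + η / 2 := by
          refine add_lt_add (mem_ball.1 hxy) ?_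
          rw [dist_comm]; exact (hφ y hy).2
      _ = η := add_halves η

theorem cptInsert {z : Z} {L : ℕ → Set Z} {r : ℕ → ℝ}
    (hLc : ∀ j, IsCompact (L j)) (hLb : ∀ j, L j ⊆ ball z (r j))
    (hr : Tendsto r atTop (nhds 0)) :
    IsCompact (insert z (⋃ j, L j)) := by
  rw [isCompact_iff_ultrafilter_le_nhds]
  intro f hf
  by_cases hj : ∃ j, L j ∈ f
  · obtain ⟨j, hjf⟩ := hj
    obtain ⟨a, ha, hfa⟩ :=
      isCompact_iff_ultrafilter_le_nhds.1 (hLc j) f (Filter.le_principal_iff.2 hjf)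
    exact ⟨a, Set.mem_insert_of_mem _ (Set.mem_iUnion.2 ⟨j, ha⟩), hfa⟩
  · push_neg at hj
    refine ⟨z, Set.mem_insert _ _, Metric.nhds_basis_ball.ge_iff.2 ?_⟩
    intro ε hε
    obtain ⟨N, hN⟩ := Filter.eventually_atTop.1 (hr.eventually (eventually_lt_nhds hε))
    have h1 : insert z (⋃ j, L j) ∈ f := Filter.le_principal_iff.1 hf
    have h2 : (⋂ j ∈ Finset.range N, (L j)ᶜ) ∈ f :=
      (Filter.biInter_finset_mem _).2 fun j _ => Ultrafilter.compl_mem_iff_notMem.2 (hj j)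
    refine f.toFilter.mem_of_superset (Filter.inter_mem h1 h2) ?_
    rintro x ⟨hx1, hx2⟩
    rcases hx1 with rfl | hx1
    · exact mem_ball_self hε
    · obtain ⟨j, hjL⟩ := Set.mem_iUnion.1 hx1
      have hjN : N ≤ j := by
        by_contra hlt
        exact (Set.mem_iInter₂.1 hx2 j (Finset.mem_range.2 (not_le.1 hlt))) hjL
      exact mem_ball.2 (lt_trans (mem_ball.1 (hLb j hjL)) (hN j hjN))

theorem base_diag {z : Z} (hz : z ∈ c.Y) {r₀ ε' : ℝ} (hr₀ : 0 < r₀) (hε' : 0 < ε') :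
    ∃ r, 0 < r ∧ r ≤ r₀ ∧ ∃ K', Gd c (ball z r) K' ε' := by
  by_contra hcon
  push_neg at hcon
  -- countable family of candidate compacta
  have hQc : {H : Set X | H.Finite ∧ H ⊆ c.D}.Countable :=
    Set.countable_setOf_finite_subset c.hD
  obtain ⟨e, he⟩ := hQc.exists_eq_range ⟨∅, Set.finite_empty, Set.empty_subset _⟩
  have heP : ∀ j, (e j).Finite ∧ e j ⊆ c.D := fun j => by
    have : e j ∈ {H : Set X | H.Finite ∧ H ⊆ c.D} := he ▸ Set.mem_range_self j
    exact this
  set r : ℕ → ℝ := fun j => r₀ * (2 : ℝ)⁻¹ ^ j with hrdef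
  have hrpos : ∀ j, 0 < r j := fun j => by positivity
  have hrle : ∀ j, r j ≤ r₀ := fun j => by
    have h1 : (2 : ℝ)⁻¹ ^ j ≤ 1 := pow_le_one₀ (by norm_num) (by norm_num)
    calc r₀ * (2 : ℝ)⁻¹ ^ j ≤ r₀ * 1 := by
          exact mul_le_mul_of_nonneg_left h1 hr₀.le
      _ = r₀ := mul_one r₀
  have hrt : Tendsto r atTop (nhds 0) := by
    have := (tendsto_pow_atTop_nhds_zero_of_lt_one (by norm_num : (0:ℝ) ≤ 2⁻¹)
      (by norm_num : (2:ℝ)⁻¹ < 1)).const_mul r₀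
    simpa [hrdef, inv_pow] using this
  have hbad : ∀ j, ∃ L, IsCompact L ∧ L ⊆ ball z (r j) ∩ c.Y ∧
      ∀ K''', IsCompact K''' → e j ⊆ K''' → K''' ⊆ thick ε' (e j) → ¬ L ⊆ c.F K''' := by
    intro j
    have h1 := hcon (r j) (hrpos j) (hrle j) (e j)
    rw [Gd] at h1
    have h2 := not_and.mp h1 (heP j).1.isCompact
    push_neg at h2
    obtain ⟨L, hL1, hL2, hL3⟩ := h2
    exact ⟨L, hL1, hL2, fun K''' h4 h5 h6 hsub => (hL3 K''' h4 h5 h6) hsub⟩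
  choose L hLc hLs hLbad using hbad
  have hLz : ∀ j, L j ⊆ ball z (r j) := fun j => (hLs j).trans Set.inter_subset_left
  have hSc : IsCompact (insert z (⋃ j, L j)) := cptInsert hLc hLz hrt
  have hSY : insert z (⋃ j, L j) ⊆ c.Y :=
    Set.insert_subset hz (Set.iUnion_subset fun j => (hLs j).trans Set.inter_subset_right)
  obtain ⟨K'', hK''c, hSF⟩ := c.hcof _ hSc hSY
  obtain ⟨H, hHD, hHf, _, hHcov⟩ := net hK''c c.hDd (half_pos hε')
  have hQH : H ∈ Set.range e := he ▸ (⟨hHf, hHD⟩ : H ∈ {H : Set X | H.Finite ∧ H ⊆ c.D})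
  obtain ⟨j, hj⟩ := hQH
  refine hLbad j (e j ∪ K'') ((heP j).1.isCompact.union hK''c) Set.subset_union_left ?_ ?_
  · refine Set.union_subset (subset_thick hε'.le _) ?_
    intro x hx
    obtain ⟨h, hh, hdx⟩ := hHcov x hx
    exact ⟨h, by rw [hj]; exact hh, hdx.le.trans (by linarith)⟩
  · have hLj : L j ⊆ insert z (⋃ j, L j) := (Set.subset_iUnion L j).trans (Set.subset_insert _ _)
    exact hLj.trans (hSF.trans (c.hmono K'' (e j ∪ K'') hK''c
      ((heP j).1.isCompact.union hK''c) Set.subset_union_right))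

theorem step_diag {V : Set Z} {K : Set X} {ε : ℝ} (hgd : Gd c V K ε) {z : Z}
    (hz : z ∈ c.Y) {r₀ ε' : ℝ} (hball : ball z r₀ ⊆ V) (hr₀ : 0 < r₀)
    (hε : 0 < ε) (hε' : 0 < ε') :
    ∃ r, 0 < r ∧ r ≤ r₀ ∧ ∃ K', K ⊆ K' ∧ K' ⊆ thick (2 * ε) K ∧
      Gd c (ball z r) K' ε' := by
  by_contra hcon
  push_neg at hcon
  have hK : IsCompact K := hgd.1
  set Q : Set (Set X) := (fun H => K ∪ H) '' {H | H.Finite ∧ H ⊆ c.D ∧ H ⊆ thick (2 * ε) K}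
    with hQdef
  have hQc : Q.Countable := by
    have h0 : {H : Set X | H.Finite ∧ H ⊆ c.D ∧ H ⊆ thick (2 * ε) K}.Countable := by
      refine (Set.countable_setOf_finite_subset c.hD).mono fun H hH => ?_
      exact ⟨hH.1, hH.2.1⟩
    exact h0.image _
  have hQne : Q.Nonempty :=
    ⟨K ∪ ∅, ⟨∅, ⟨Set.finite_empty, Set.empty_subset _, Set.empty_subset _⟩, rfl⟩⟩
  obtain ⟨e, he⟩ := hQc.exists_eq_range hQne
  have heP : ∀ j, IsCompact (e j) ∧ K ⊆ e j ∧ e j ⊆ thick (2 * ε) K := by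
    intro j
    have hmem : e j ∈ Q := he ▸ Set.mem_range_self j
    obtain ⟨H, ⟨hf, _, hth⟩, hEq⟩ := hmem
    rw [← hEq]
    exact ⟨hK.union hf.isCompact, Set.subset_union_left,
      Set.union_subset (subset_thick (by positivity) K) hth⟩
  set r : ℕ → ℝ := fun j => r₀ * (2 : ℝ)⁻¹ ^ j with hrdef
  have hrpos : ∀ j, 0 < r j := fun j => by positivity
  have hrle : ∀ j, r j ≤ r₀ := fun j => by
    have h1 : (2 : ℝ)⁻¹ ^ j ≤ 1 := pow_le_one₀ (by norm_num) (by norm_num)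
    calc r₀ * (2 : ℝ)⁻¹ ^ j ≤ r₀ * 1 := mul_le_mul_of_nonneg_left h1 hr₀.le
      _ = r₀ := mul_one r₀
  have hrt : Tendsto r atTop (nhds 0) := by
    have := (tendsto_pow_atTop_nhds_zero_of_lt_one (by norm_num : (0:ℝ) ≤ 2⁻¹)
      (by norm_num : (2:ℝ)⁻¹ < 1)).const_mul r₀
    simpa [hrdef, inv_pow] using this
  have hbad : ∀ j, ∃ L, IsCompact L ∧ L ⊆ ball z (r j) ∩ c.Y ∧
      ∀ K3, IsCompact K3 → e j ⊆ K3 → K3 ⊆ thick ε' (e j) → ¬ L ⊆ c.F K3 := by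
    intro j
    have h1 := hcon (r j) (hrpos j) (hrle j) (e j) (heP j).2.1 (heP j).2.2
    rw [Gd] at h1
    have h2 := not_and.mp h1 (heP j).1
    push_neg at h2
    obtain ⟨L, hL1, hL2, hL3⟩ := h2
    exact ⟨L, hL1, hL2, fun K3 h4 h5 h6 hsub => (hL3 K3 h4 h5 h6) hsub⟩
  choose L hLc hLs hLbad using hbad
  have hLz : ∀ j, L j ⊆ ball z (r j) := fun j => (hLs j).trans Set.inter_subset_left
  have hSc : IsCompact (insert z (⋃ j, L j)) := cptInsert hLc hLz hrt
  have hSV : insert z (⋃ j, L j) ⊆ V ∩ c.Y := by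
    refine Set.insert_subset ⟨hball (mem_ball_self hr₀), hz⟩
      (Set.iUnion_subset fun j => Set.subset_inter ?_ ((hLs j).trans Set.inter_subset_right))
    exact (hLz j).trans ((ball_subset_ball (hrle j)).trans hball)
  obtain ⟨K2, hK2c, hKK2, hK2th, hSF⟩ := hgd.2 _ hSc hSV
  have hη : 0 < min ε ε' / 2 := by positivity
  obtain ⟨H, hHD, hHf, hHnear, hHcov⟩ := net hK2c c.hDd hη
  have hHth : H ⊆ thick (2 * ε) K := by
    intro h hh
    obtain ⟨x, hx, hdx⟩ := hHnear h hh
    obtain ⟨a, ha, hda⟩ := hK2th hx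
    refine ⟨a, ha, (dist_triangle h x a).trans ?_⟩
    have h1 : min ε ε' / 2 ≤ ε := by
      have := min_le_left ε ε'
      linarith
    linarith
  have hQH : K ∪ H ∈ Q := ⟨H, ⟨hHf, hHD, hHth⟩, rfl⟩
  rw [he] at hQH
  obtain ⟨j, hj⟩ := hQH
  refine hLbad j ((K ∪ H) ∪ K2) (((hK.union hHf.isCompact)).union hK2c)
    (by rw [hj]; exact Set.subset_union_left) ?_ ?_
  · rw [hj]
    refine Set.union_subset (subset_thick hε'.le _) ?_
    intro x hx
    obtain ⟨h, hh, hdx⟩ := hHcov x hx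
    have h2 : min ε ε' / 2 ≤ ε' := by
      have := min_le_right ε ε'
      linarith
    exact ⟨h, Set.mem_union_right _ hh, hdx.le.trans h2⟩
  · have hLj : L j ⊆ insert z (⋃ j, L j) := (Set.subset_iUnion L j).trans (Set.subset_insert _ _)
    exact hLj.trans (hSF.trans (c.hmono K2 ((K ∪ H) ∪ K2) hK2c
      (((hK.union hHf.isCompact)).union hK2c) Set.subset_union_right))

theorem pf_refine {ι : Type w} (V : ι → Set Z) (hV : ∀ i, IsOpen (V i)) :
    ∃ W : ι → Set Z, (∀ i, IsOpen (W i)) ∧ (∀ i, W i ⊆ V i) ∧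
      (⋃ i, W i) = ⋃ i, V i ∧ ∀ z : Z, {i | z ∈ W i}.Finite := by
  classical
  set O : Set Z := ⋃ i, V i with hO
  have hOo : IsOpen O := isOpen_iUnion hV
  set u : ι → Set ↥O := fun i => Subtype.val ⁻¹' V i with hu
  have huo : ∀ i, IsOpen (u i) := fun i => (hV i).preimage continuous_subtype_val
  have huc : ⋃ i, u i = Set.univ := by
    ext x
    simp only [Set.mem_iUnion, Set.mem_univ, iff_true, hu, Set.mem_preimage]
    exact Set.mem_iUnion.1 x.2
  obtain ⟨v, hvo, hvu, hvlf, hvs⟩ := precise_refinement u huo huc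
  refine ⟨fun i => Subtype.val '' v i, fun i => hOo.isOpenMap_subtype_val _ (hvo i),
    fun i => ?_, ?_, ?_⟩
  · rintro x ⟨w, hw, rfl⟩
    exact hvs i hw
  · apply Set.Subset.antisymm
    · refine Set.iUnion_subset fun i => ?_
      rintro x ⟨w, hw, rfl⟩
      exact Set.mem_iUnion.2 ⟨i, hvs i hw⟩
    · intro x hx
      have hxO : x ∈ O := hx
      have hxu : (⟨x, hxO⟩ : ↥O) ∈ ⋃ i, v i := hvu ▸ Set.mem_univ _
      obtain ⟨i, hi⟩ := Set.mem_iUnion.1 hxu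
      exact Set.mem_iUnion.2 ⟨i, ⟨⟨x, hxO⟩, hi, rfl⟩⟩
  · intro z
    by_cases hz : z ∈ O
    · refine ((hvlf.point_finite ⟨z, hz⟩).subset ?_)
      intro i hi
      obtain ⟨w, hw, hwz⟩ := hi
      have hww : w = ⟨z, hz⟩ := Subtype.ext hwz
      rw [hww] at hw
      exact hw
    · have hempty : {i | z ∈ Subtype.val '' v i} = ∅ := by
        ext i
        simp only [Set.mem_setOf_eq, Set.mem_empty_iff_false, iff_false]
        rintro ⟨w, _, rfl⟩
        exact hz w.2
      rw [hempty]
      exact Set.finite_empty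

/-- Index type of the `n`-th level of the tree. -/
def Idx (Y : Set Z) (n : ℕ) : Type v := Fin (n + 1) → ↥Y

noncomputable def eps (n : ℕ) : ℝ := (2 : ℝ)⁻¹ ^ n

theorem eps_pos (n : ℕ) : 0 < eps n := by
  have h : (0:ℝ) < (2 : ℝ)⁻¹ := by norm_num
  exact pow_pos h n

theorem eps_succ (n : ℕ) : eps (n + 1) = (2:ℝ)⁻¹ * eps n := by
  rw [eps, eps, pow_succ]; ring

theorem eps_anti {n m : ℕ} (h : n ≤ m) : eps m ≤ eps n :=
  pow_le_pow_of_le_one (by norm_num) (by norm_num) h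

def LvlProp (n : ℕ) (N : Idx c.Y n → Set Z × Set X) : Prop :=
  (∀ i, IsOpen (N i).1) ∧ (∀ i, Gd c (N i).1 (N i).2 (eps n)) ∧
    (∀ i, (N i).1 ⊆ ball ((i (Fin.last n) : Z)) (eps n)) ∧
    (c.Y ⊆ ⋃ i, (N i).1) ∧ ∀ z : Z, {i | z ∈ (N i).1}.Finite

theorem baseEx : ∃ N : Idx c.Y 0 → Set Z × Set X, LvlProp c 0 N := by
  classical
  have key : ∀ i : Idx c.Y 0, ∃ VK : Set Z × Set X, IsOpen VK.1 ∧
      Gd c VK.1 VK.2 (eps 0) ∧ VK.1 ⊆ ball ((i (Fin.last 0) : Z)) (eps 0) ∧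
      ((i (Fin.last 0) : Z)) ∈ VK.1 := by
    intro i
    obtain ⟨r, hr0, hrle, K', hgd⟩ := base_diag c (i (Fin.last 0)).2 (eps_pos 0) (eps_pos 0)
    exact ⟨(ball ((i (Fin.last 0) : Z)) r, K'), isOpen_ball, hgd, ball_subset_ball hrle,
      mem_ball_self hr0⟩
  choose VK h1 h2 h3 h4 using key
  obtain ⟨W, hWo, hWs, hWu, hWpf⟩ := pf_refine (fun i => (VK i).1) h1
  refine ⟨fun i => (W i, (VK i).2), hWo, fun i => gd_mono c (hWs i) (h2 i),
    fun i => (hWs i).trans (h3 i), ?_, hWpf⟩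
  intro y hy
  have hmem : y ∈ ⋃ i, (VK i).1 := Set.mem_iUnion.2 ⟨fun _ => ⟨y, hy⟩, h4 _⟩
  show y ∈ ⋃ i, W i
  rw [hWu]
  exact hmem

theorem stepEx (n : ℕ) (N : Idx c.Y n → Set Z × Set X) (hN : LvlProp c n N) :
    ∃ N' : Idx c.Y (n + 1) → Set Z × Set X, LvlProp c (n + 1) N' ∧
      ∀ i' : Idx c.Y (n + 1),
        (N' i').1 ⊆ (N (Fin.init i')).1 ∧ (N (Fin.init i')).2 ⊆ (N' i').2 ∧
        (N' i').2 ⊆ thick (2 * eps n) ((N (Fin.init i')).2) := by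
  classical
  have key : ∀ i' : Idx c.Y (n + 1), ∃ VK : Set Z × Set X,
      IsOpen VK.1 ∧ Gd c VK.1 VK.2 (eps (n + 1)) ∧
      VK.1 ⊆ ball ((i' (Fin.last (n + 1)) : Z)) (eps (n + 1)) ∧
      VK.1 ⊆ (N (Fin.init i')).1 ∧ (N (Fin.init i')).2 ⊆ VK.2 ∧
      VK.2 ⊆ thick (2 * eps n) ((N (Fin.init i')).2) ∧
      ((i' (Fin.last (n + 1)) : Z) ∈ (N (Fin.init i')).1 →
        (i' (Fin.last (n + 1)) : Z) ∈ VK.1) := by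
    intro i'
    by_cases hy : ((i' (Fin.last (n + 1)) : Z)) ∈ (N (Fin.init i')).1
    · obtain ⟨δ, hδ0, hδ⟩ := Metric.isOpen_iff.1 (hN.1 (Fin.init i')) _ hy
      obtain ⟨r, hr0, hrle, K', hKlo, hKhi, hgd⟩ := step_diag c (hN.2.1 (Fin.init i'))
        (i' (Fin.last (n + 1))).2
        (show ball ((i' (Fin.last (n + 1)) : Z)) (min (eps (n + 1)) δ) ⊆ (N (Fin.init i')).1 from
          (ball_subset_ball (min_le_right _ _)).trans hδ)
        (lt_min (eps_pos _) hδ0) (eps_pos n) (eps_pos (n + 1))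
      exact ⟨(ball ((i' (Fin.last (n + 1)) : Z)) r, K'), isOpen_ball, hgd,
        ball_subset_ball (hrle.trans (min_le_left _ _)),
        (ball_subset_ball hrle).trans ((ball_subset_ball (min_le_right _ _)).trans hδ),
        hKlo, hKhi, fun _ => mem_ball_self hr0⟩
    · exact ⟨(∅, (N (Fin.init i')).2), isOpen_empty,
        gd_empty c ((hN.2.1 (Fin.init i')).1) (eps_pos (n + 1)).le,
        Set.empty_subset _, Set.empty_subset _, subset_rfl,
        subset_thick (by have := eps_pos n; positivity) _, fun h => absurd h hy⟩
  choose VK h1 h2 h3 h4 h5 h6 h7 using key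
  obtain ⟨W, hWo, hWs, hWu, hWpf⟩ := pf_refine (fun i' => (VK i').1) h1
  refine ⟨fun i' => (W i', (VK i').2),
    ⟨hWo, fun i' => gd_mono c (hWs i') (h2 i'), fun i' => (hWs i').trans (h3 i'), ?_, hWpf⟩,
    fun i' => ⟨(hWs i').trans (h4 i'), h5 i', h6 i'⟩⟩
  intro y hy
  obtain ⟨i, hi⟩ := Set.mem_iUnion.1 (hN.2.2.2.1 hy)
  have h8 := h7 (Fin.snoc i ⟨y, hy⟩)
  rw [show Fin.init (Fin.snoc i ⟨y, hy⟩ : Idx c.Y (n + 1)) = i from Fin.init_snoc _ _,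
    show (Fin.snoc i ⟨y, hy⟩ : Idx c.Y (n + 1)) (Fin.last (n + 1)) = ⟨y, hy⟩ from
      Fin.snoc_last _ _] at h8
  have h9 := h8 hi
  show y ∈ ⋃ i', W i'
  rw [hWu]
  exact Set.mem_iUnion.2 ⟨_, h9⟩

noncomputable def tower : ∀ n, {N : Idx c.Y n → Set Z × Set X // LvlProp c n N} :=
  fun n => Nat.rec ⟨(baseEx c).choose, (baseEx c).choose_spec⟩
    (fun n prev => ⟨(stepEx c n prev.1 prev.2).choose,
      (stepEx c n prev.1 prev.2).choose_spec.1⟩) n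

theorem tower_link (n : ℕ) :
    ∀ i' : Idx c.Y (n + 1),
      ((tower c (n + 1)).1 i').1 ⊆ ((tower c n).1 (Fin.init i')).1 ∧
      ((tower c n).1 (Fin.init i')).2 ⊆ ((tower c (n + 1)).1 i').2 ∧
      ((tower c (n + 1)).1 i').2 ⊆ thick (2 * eps n) (((tower c n).1 (Fin.init i')).2) :=
  (stepEx c n (tower c n).1 (tower c n).2).choose_spec.2

def anc {Y : Set Z} {n m : ℕ} (h : n ≤ m) (i : Idx Y m) : Idx Y n :=
  fun j => i (Fin.castLE (Nat.succ_le_succ h) j)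

omit [MetricSpace Z] in
theorem anc_anc {Y : Set Z} {n m k : ℕ} (h1 : n ≤ m) (h2 : m ≤ k) (i : Idx Y k) :
    anc h1 (anc h2 i) = anc (h1.trans h2) i := rfl

omit [MetricSpace Z] in
theorem anc_rfl {Y : Set Z} {n : ℕ} (i : Idx Y n) : anc le_rfl i = i := rfl

omit [MetricSpace Z] in
theorem anc_init {Y : Set Z} {n : ℕ} (i : Idx Y (n + 1)) :
    Fin.init i = anc (Nat.le_succ n) i := rfl

theorem pigeon {α : Type w} {T : Set α} (hT : T.Finite) (g : ℕ → α) (hg : ∀ m, g m ∈ T) :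
    ∃ a ∈ T, ∀ m : ℕ, ∃ m' ≥ m, g m' = a := by
  haveI := hT.to_subtype
  obtain ⟨a, ha⟩ := Finite.exists_infinite_fiber (fun m => (⟨g m, hg m⟩ : ↥T))
  refine ⟨a.1, a.2, fun m => ?_⟩
  have hinf : {m | (⟨g m, hg m⟩ : ↥T) = a}.Infinite := by
    rw [Set.infinite_coe_iff] at ha
    exact ha.mono fun m hm => hm
  obtain ⟨m', hm', hlt⟩ := hinf.exists_gt m
  exact ⟨m', hlt.le, congrArg Subtype.val hm'⟩

theorem core [CompleteSpace X] (c : Ctx X Z) :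
    ∃ U : ℕ → Set Z, (∀ n, IsOpen (U n)) ∧ c.Y = ⋂ n, U n := by
  classical
  have hprop : ∀ n, LvlProp c n ((tower c n).1) := fun n => (tower c n).2
  set node : ∀ n, Idx c.Y n → Set Z × Set X := fun n => (tower c n).1 with hnode
  have hlink : ∀ (n : ℕ) (i' : Idx c.Y (n + 1)),
      (node (n + 1) i').1 ⊆ (node n (Fin.init i')).1 ∧
      (node n (Fin.init i')).2 ⊆ (node (n + 1) i').2 ∧
      (node (n + 1) i').2 ⊆ thick (2 * eps n) ((node n (Fin.init i')).2) :=
    fun n => tower_link c n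
  refine ⟨fun n => (⋃ i, (node n i).1) ∩ Metric.thickening (eps n) c.Y,
    fun n => (isOpen_iUnion fun i => (hprop n).1 i).inter Metric.isOpen_thickening, ?_⟩
  apply Set.Subset.antisymm
  · intro y hy
    refine Set.mem_iInter.2 fun n =>
      ⟨(hprop n).2.2.2.1 hy, Metric.self_subset_thickening (eps_pos n) _ hy⟩
  · intro z hz
    rw [Set.mem_iInter] at hz
    have hzG : ∀ n, ∃ i, z ∈ (node n i).1 := fun n => Set.mem_iUnion.1 (hz n).1
    have hzC : ∀ ε : ℝ, 0 < ε → ∃ y ∈ c.Y, dist z y < ε := by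
      intro ε hε
      obtain ⟨n, hn⟩ := exists_pow_lt_of_lt_one hε (by norm_num : (2:ℝ)⁻¹ < 1)
      obtain ⟨y, hy, hyd⟩ := Metric.mem_thickening_iff.1 (hz n).2
      exact ⟨y, hy, hyd.trans hn⟩
    -- going down the tree
    have hdown : ∀ n m (h : n ≤ m) (i : Idx c.Y m), z ∈ (node m i).1 →
        z ∈ (node n (anc h i)).1 := by
      intro n m h
      induction m, h using Nat.le_induction with
      | base => intro i hi; rwa [anc_rfl]
      | succ m hm ih =>
        intro i hi
        have h1 := (hlink m i).1 hi
        have h2 := ih (Fin.init i) h1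
        rwa [anc_init, anc_anc] at h2
    -- König's lemma along the point-finite levels
    set P : ∀ n, Idx c.Y n → Prop := fun n i =>
      z ∈ (node n i).1 ∧ ∀ m (h : n ≤ m), ∃ j : Idx c.Y m, z ∈ (node m j).1 ∧ anc h j = i
      with hP
    have hP0 : ∃ i, P 0 i := by
      choose j0 hj0 using hzG
      have hg : ∀ m, anc (Nat.zero_le m) (j0 m) ∈ {i : Idx c.Y 0 | z ∈ (node 0 i).1} :=
        fun m => hdown 0 m _ _ (hj0 m)
      obtain ⟨a, haT, hamany⟩ := pigeon ((hprop 0).2.2.2.2 z) _ hg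
      refine ⟨a, haT, fun m h => ?_⟩
      obtain ⟨m', hm', hgm⟩ := hamany m
      refine ⟨anc hm' (j0 m'), hdown m m' hm' _ (hj0 m'), ?_⟩
      rw [anc_anc]
      exact hgm
    have hPs : ∀ n (i : Idx c.Y n), P n i →
        ∃ i' : Idx c.Y (n + 1), Fin.init i' = i ∧ P (n + 1) i' := by
      intro n i hPi
      have hw : ∀ m : ℕ, ∃ j : Idx c.Y (n + 1 + m), z ∈ (node (n + 1 + m) j).1 ∧
          anc (by omega) j = i := fun m => hPi.2 (n + 1 + m) (by omega)
      choose j hj1 hj2 using hw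
      set T : Set (Idx c.Y (n + 1)) :=
        {i' | z ∈ (node (n + 1) i').1 ∧ anc (Nat.le_succ n) i' = i} with hT
      have hTf : T.Finite := ((hprop (n + 1)).2.2.2.2 z).subset fun i' h => h.1
      have hg : ∀ m, anc (by omega : n + 1 ≤ n + 1 + m) (j m) ∈ T := by
        intro m
        refine ⟨hdown _ _ _ _ (hj1 m), ?_⟩
        rw [anc_anc]
        exact hj2 m
      obtain ⟨a, haT, hamany⟩ := pigeon hTf _ hg
      refine ⟨a, by rw [anc_init]; exact haT.2, haT.1, fun m h => ?_⟩
      obtain ⟨m', _, hgm⟩ := hamany (m - (n + 1))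
      refine ⟨anc (show m ≤ n + 1 + m' by omega) (j m'), hdown _ _ _ _ (hj1 m'), ?_⟩
      rw [anc_anc]
      exact hgm
    -- the branch
    let b : ∀ n, {i : Idx c.Y n // P n i} := fun n =>
      Nat.rec ⟨hP0.choose, hP0.choose_spec⟩
        (fun n prev => ⟨(hPs n prev.1 prev.2).choose, (hPs n prev.1 prev.2).choose_spec.2⟩) n
    have hbinit : ∀ n, Fin.init (b (n + 1)).1 = (b n).1 :=
      fun n => (hPs n (b n).1 (b n).2).choose_spec.1
    set Wb : ℕ → Set Z := fun n => (node n (b n).1).1 with hWb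
    set Kb : ℕ → Set X := fun n => (node n (b n).1).2 with hKb
    have hzWb : ∀ n, z ∈ Wb n := fun n => (b n).2.1
    have hgd : ∀ n, Gd c (Wb n) (Kb n) (eps n) := fun n => (hprop n).2.1 (b n).1
    have hKmono : ∀ n, Kb n ⊆ Kb (n + 1) := by
      intro n
      have h1 := (hlink n (b (n + 1)).1).2.1
      rwa [hbinit n] at h1
    have hKth : ∀ n, Kb (n + 1) ⊆ thick (2 * eps n) (Kb n) := by
      intro n
      have h1 := (hlink n (b (n + 1)).1).2.2
      rwa [hbinit n] at h1
    have hsmall : ∀ n, Wb n ⊆ ball (((b n).1 (Fin.last n) : Z)) (eps n) :=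
      fun n => (hprop n).2.2.1 (b n).1
    -- choose approximating points in Y
    have hyex : ∀ n, ∃ y, y ∈ c.Y ∧ y ∈ Wb n := by
      intro n
      obtain ⟨δ, hδ, hball⟩ := Metric.isOpen_iff.1 ((hprop n).1 (b n).1) z (hzWb n)
      obtain ⟨y, hy, hyd⟩ := hzC δ hδ
      exact ⟨y, hy, hball (mem_ball.2 (by rwa [dist_comm]))⟩
    choose y hyY hyW using hyex
    have hyF : ∀ n, ∃ Kp, IsCompact Kp ∧ Kb n ⊆ Kp ∧ Kp ⊆ thick (eps n) (Kb n) ∧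
        y n ∈ c.F Kp := by
      intro n
      obtain ⟨Kp, hp1, hp2, hp3, hp4⟩ := (hgd n).2 {y n} isCompact_singleton
        (Set.singleton_subset_iff.2 ⟨hyW n, hyY n⟩)
      exact ⟨Kp, hp1, hp2, hp3, Set.singleton_subset_iff.1 hp4⟩
    choose Kp hKpc hKplo hKphi hKpF using hyF
    -- chain estimates
    have hchain : ∀ n m, n ≤ m → Kb m ⊆ thick (4 * eps n - 4 * eps m) (Kb n) := by
      intro n m h
      induction m, h using Nat.le_induction with
      | base =>
        rw [sub_self]
        exact subset_thick le_rfl _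
      | succ m hm ih =>
        refine (hKth m).trans ((thick_comp ih).trans (thick_mono subset_rfl ?_))
        have h1 : eps (m + 1) = 2⁻¹ * eps m := eps_succ m
        rw [h1]
        ring_nf
        linarith [eps_pos m]
    have hKpch : ∀ n m, n ≤ m → Kp m ⊆ thick (5 * eps n) (Kb n) := by
      intro n m h
      refine (hKphi m).trans ((thick_comp (hchain n m h)).trans
        (thick_mono subset_rfl ?_))
      have h1 := eps_pos m
      have h2 := eps_pos n
      have h3 := eps_anti h
      linarith
    -- total boundedness of the union
    have hTB : TotallyBounded (⋃ m, Kp m) := by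
      rw [Metric.totallyBounded_iff]
      intro ε hε
      obtain ⟨N, hN⟩ : ∃ N, 5 * eps N < ε / 2 := by
        obtain ⟨N, hN⟩ := exists_pow_lt_of_lt_one (show (0:ℝ) < ε / 2 / 5 by positivity)
          (by norm_num : (2:ℝ)⁻¹ < 1)
        refine ⟨N, ?_⟩
        have : eps N < ε / 2 / 5 := hN
        linarith
      have hA : IsCompact (⋃ m ∈ Set.Iic N, Kp m) :=
        (Set.finite_Iic N).isCompact_biUnion fun m _ => hKpc m
      obtain ⟨t, htf, htcov⟩ := Metric.totallyBounded_iff.1 hA.totallyBounded (ε / 2)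
        (by positivity)
      refine ⟨t, htf, ?_⟩
      intro x hx
      obtain ⟨m, hm⟩ := Set.mem_iUnion.1 hx
      by_cases hmN : m ≤ N
      · have hxA : x ∈ ⋃ m ∈ Set.Iic N, Kp m := Set.mem_biUnion hmN hm
        obtain ⟨p, hp, hpx⟩ := Set.mem_iUnion₂.1 (htcov hxA)
        refine Set.mem_biUnion hp (mem_ball.2 ?_)
        have := mem_ball.1 hpx
        linarith
      · obtain ⟨k, hk, hdk⟩ := hKpch N m (le_of_not_ge hmN) hm
        have hkA : k ∈ ⋃ m ∈ Set.Iic N, Kp m :=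
          Set.mem_biUnion (Set.mem_Iic.2 le_rfl) (hKplo N hk)
        obtain ⟨p, hp, hpk⟩ := Set.mem_iUnion₂.1 (htcov hkA)
        refine Set.mem_biUnion hp (mem_ball.2 ?_)
        have h1 := mem_ball.1 hpk
        calc dist x p ≤ dist x k + dist k p := dist_triangle _ _ _
          _ < ε := by linarith
    have hK1c : IsCompact (closure (⋃ m, Kp m)) :=
      TotallyBounded.isCompact_of_isClosed hTB.closure isClosed_closure
    have hyFK : ∀ n, y n ∈ c.F (closure (⋃ m, Kp m)) := fun n =>
      c.hmono (Kp n) _ (hKpc n) hK1c ((Set.subset_iUnion Kp n).trans subset_closure) (hKpF n)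
    have hFcl : IsClosed (c.F (closure (⋃ m, Kp m))) := (c.hFc _ hK1c).isClosed
    have hyz : Tendsto y atTop (nhds z) := by
      rw [Metric.tendsto_atTop]
      intro ε hε
      obtain ⟨N, hN⟩ : ∃ N, 2 * eps N < ε := by
        obtain ⟨N, hN⟩ := exists_pow_lt_of_lt_one (show (0:ℝ) < ε / 2 by positivity)
          (by norm_num : (2:ℝ)⁻¹ < 1)
        refine ⟨N, ?_⟩
        have : eps N < ε / 2 := hN
        linarith
      refine ⟨N, fun n hn => ?_⟩
      have h1 : dist (y n) (((b n).1 (Fin.last n) : Z)) < eps n := mem_ball.1 (hsmall n (hyW n))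
      have h2 : dist z (((b n).1 (Fin.last n) : Z)) < eps n := mem_ball.1 (hsmall n (hzWb n))
      have h3 := eps_anti hn
      calc dist (y n) z ≤ dist (y n) (((b n).1 (Fin.last n) : Z)) +
            dist (((b n).1 (Fin.last n) : Z)) z := dist_triangle _ _ _
        _ < ε := by rw [dist_comm (((b n).1 (Fin.last n) : Z)) z]; linarith
    have hzF : z ∈ c.F (closure (⋃ m, Kp m)) :=
      hFcl.mem_of_tendsto hyz (Filter.Eventually.of_forall hyFK)
    exact c.hFY _ hK1c hzF

theorem polish_iInter {Z : Type w} [TopologicalSpace Z] [PolishSpace Z] (U : ℕ → Set Z)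
    (hU : ∀ n, IsOpen (U n)) : PolishSpace ↥(⋂ n, U n) := by
  haveI : ∀ n, PolishSpace ↥(U n) := fun n => (hU n).polishSpace
  let f : ↥(⋂ n, U n) → ∀ n, ↥(U n) := fun x n => ⟨x.1, Set.mem_iInter.1 x.2 n⟩
  have hfc : Continuous f := continuous_pi fun n => Continuous.subtype_mk continuous_subtype_val _
  have hfe : Topology.IsEmbedding f := by
    refine Topology.IsEmbedding.of_comp hfc ((continuous_apply 0).subtype_val) ?_
    exact Topology.IsEmbedding.subtypeVal
  have hfr : IsClosed (Set.range f) := by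
    have hre : Set.range f = ⋂ n, {p : ∀ n, ↥(U n) | ((p n : Z)) = ((p 0 : Z))} := by
      ext p
      constructor
      · rintro ⟨x, rfl⟩
        exact Set.mem_iInter.2 fun n => rfl
      · intro hp
        have hmem : ((p 0 : Z)) ∈ ⋂ n, U n := Set.mem_iInter.2 fun n => by
          have h1 := Set.mem_iInter.1 hp n
          rw [← h1]
          exact (p n).2
        refine ⟨⟨(p 0 : Z), hmem⟩, ?_⟩
        funext n
        exact Subtype.ext (Set.mem_iInter.1 hp n).symm
    rw [hre]
    exact isClosed_iInter fun n =>
      isClosed_eq ((continuous_apply n).subtype_val) ((continuous_apply 0).subtype_val)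
  exact Topology.IsClosedEmbedding.polishSpace ⟨hfe, hfr⟩

end Chris


/-- Christensen's theorem: a separable metrizable space `Y` is completely metrizable iff
there exist a Polish space `X` and a monotone cofinal map `F : K(X) → K(Y)`. -/
theorem stmt0 {Y : Type} [TopologicalSpace Y] [T35Space Y]
    [TopologicalSpace.SeparableSpace Y] [TopologicalSpace.MetrizableSpace Y] :
    CompletelyMetrizable Y ↔
      ∃ (X : Type) (tX : TopologicalSpace X), @PolishSpace X tX ∧
        ∃ F : Set X → Set Y,
          (∀ K : Set X, @IsCompact X tX K → IsCompact (F K)) ∧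
          @CondMonotone X Y tX _ F ∧
          @CondCofinal X Y tX _ F := by
  constructor
  · rintro ⟨m, hm, hcomp⟩
    haveI hsc : SecondCountableTopology Y := by
      letI mY : MetricSpace Y := TopologicalSpace.metrizableSpaceMetric Y
      exact UniformSpace.secondCountable_of_separable Y
    have hpol : PolishSpace Y :=
      { toSecondCountableTopology := hsc, complete := ⟨m, hm, hcomp⟩ }
    exact ⟨Y, ‹TopologicalSpace Y›, hpol, fun K => K, fun K hK => hK,
      fun K L _ _ h => h, fun L hL => ⟨L, hL, subset_rfl⟩⟩
  · rintro ⟨X, tX, hP, F, hFc, hmono, hcof⟩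
    letI := TopologicalSpace.upgradeIsCompletelyMetrizable X
    letI mY : MetricSpace Y := TopologicalSpace.metrizableSpaceMetric Y
    obtain ⟨D, hDc, hDd⟩ := TopologicalSpace.exists_countable_dense X
    let ι : Y → UniformSpace.Completion Y := (↑)
    have hiso : Isometry ι := UniformSpace.Completion.coe_isometry
    have hemb : Topology.IsEmbedding ι := hiso.isUniformInducing.isUniformEmbedding.isEmbedding
    let c : Chris.Ctx X (UniformSpace.Completion Y) :=
      { Y := Set.range ι
        F := fun K => ι '' F K
        D := D
        hD := hDc
        hDd := hDd
        hFY := fun K _ => Set.image_subset_range _ _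
        hFc := fun K hK => (hFc K hK).image hiso.continuous
        hmono := fun K L hK hL h => Set.image_mono  (hmono K L hK hL h)
        hcof := by
          intro L hL hLY
          have himg : ι '' (ι ⁻¹' L) = L := Set.image_preimage_eq_of_subset hLY
          have hLc : IsCompact (ι ⁻¹' L) := by
            rw [hemb.isCompact_iff, himg]
            exact hL
          obtain ⟨K, hK, hLK⟩ := hcof (ι ⁻¹' L) hLc
          exact ⟨K, hK, by rw [← himg]; exact Set.image_mono  hLK⟩ }
    obtain ⟨U, hUo, hUeq⟩ := Chris.core c
    haveI : TopologicalSpace.SeparableSpace (UniformSpace.Completion Y) :=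
      UniformSpace.Completion.denseRange_coe.separableSpace hiso.continuous
    haveI : PolishSpace (UniformSpace.Completion Y) := inferInstance
    haveI hPS : PolishSpace ↥(Set.range ι) := by
      have hYeq : Set.range ι = ⋂ n, U n := hUeq
      rw [hYeq]
      exact Chris.polish_iInter U hUo
    let e : Y ≃ ↥(Set.range ι) := Equiv.ofInjective ι hiso.injective
    haveI hYP : PolishSpace Y := by
      have h1 := Equiv.polishSpace_induced e
      have h2 : TopologicalSpace.induced (fun y => e y) instTopologicalSpaceSubtype =
          ‹TopologicalSpace Y› := by
        rw [instTopologicalSpaceSubtype, induced_compose]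
        exact hemb.eq_induced.symm
      rwa [h2] at h1
    exact hYP.complete
end

section
/- Let Y be a separable metrizable space. Then Y is completely metrizable if and only if there exist a Polish space X and a map F : K(X) → K(Y) such that (1) F is monotone, and (2)_c for each countable compact L ⊆ Y there is a compact K ⊆ X with L ⊆ F(K). -/
open Set Filter Topology

universe u v

section ChristensenAuxAll
open Metric UniformSpace


section ChristensenAux

variable {Y : Type} [MetricSpace Y] {X : Type} [MetricSpace X]

/-- All countable compact subsets of `Y` whose image lies in `b ⊆ Completion Y`
are `F`-covered by compact subsets of `A ⊆ X`. -/
def ChTrap (F : Set X → Set Y) (b : Set (Completion Y)) (A : Set X) : Prop :=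
  ∀ L : Set Y, IsCompact L → L.Countable → ((↑) '' L ⊆ b) →
    ∃ Q : Set X, IsCompact Q ∧ Q ⊆ A ∧ L ⊆ F Q

lemma ChTrap.mono {F : Set X → Set Y} {b b' : Set (Completion Y)} {A A' : Set X}
    (h : ChTrap F b A) (hb : b' ⊆ b) (hA : A ⊆ A') : ChTrap F b' A' := by
  intro L hL hLc hLb
  obtain ⟨Q, hQ1, hQ2, hQ3⟩ := h L hL hLc (hLb.trans hb)
  exact ⟨Q, hQ1, hQ2.trans hA, hQ3⟩

/-- a union of countably many compact sets shrinking to a point, together with that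
point, is compact. -/
lemma isCompact_shrinking_union {Z : Type*} [MetricSpace Z] (y : Z) (K : ℕ → Set Z)
    (hK : ∀ e, IsCompact (K e)) (hb : ∀ e, K e ⊆ Metric.ball y (1 / (e + 1))) :
    IsCompact ({y} ∪ ⋃ e, K e) := by
  classical
  rw [isCompact_iff_finite_subcover]
  intro ι U hU hcov
  have hy : y ∈ {y} ∪ ⋃ e, K e := Or.inl rfl
  obtain ⟨i0, hi0⟩ : ∃ i0, y ∈ U i0 := by
    have := hcov hy; simpa using this
  obtain ⟨ε, hε, hball⟩ := Metric.isOpen_iff.mp (hU i0) y hi0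
  obtain ⟨E, hE⟩ : ∃ E : ℕ, 1 / ((E : ℝ) + 1) < ε := by
    obtain ⟨E, hE⟩ := exists_nat_one_div_lt hε
    exact ⟨E, hE⟩
  -- head: finitely many compacts
  have hhead : IsCompact (⋃ e ∈ Finset.range (E + 1), K e) :=
    (Finset.range (E + 1)).isCompact_biUnion (fun e _ => hK e)
  obtain ⟨t, ht⟩ := (isCompact_iff_finite_subcover.mp hhead) U hU
    (fun z hz => hcov (Or.inr (by
      simp only [Set.mem_iUnion] at hz ⊢
      obtain ⟨e, _, hze⟩ := hz
      exact ⟨e, hze⟩)))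
  refine ⟨insert i0 t, fun z hz => ?_⟩
  rcases hz with hz | hz
  · simp only [Set.mem_singleton_iff] at hz
    subst hz
    exact Set.mem_biUnion (Finset.mem_insert_self _ _) hi0
  · simp only [Set.mem_iUnion] at hz
    obtain ⟨e, hze⟩ := hz
    by_cases he : e ≤ E
    · have : z ∈ ⋃ e ∈ Finset.range (E + 1), K e :=
        Set.mem_biUnion (Finset.mem_range.mpr (Nat.lt_succ_of_le he)) hze
      obtain ⟨i, hi, hzi⟩ := Set.mem_iUnion₂.mp (ht this)
      exact Set.mem_biUnion (Finset.mem_insert_of_mem hi) hzi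
    · push_neg at he
      have : z ∈ Metric.ball y ε := by
        have h1 := hb e hze
        have hcast : ((E : ℝ) + 1) ≤ ((e : ℝ) + 1) := by
          have := (Nat.cast_le (α := ℝ)).mpr he.le
          linarith
        have h2 : (1 : ℝ) / (e + 1) ≤ 1 / (E + 1) := by
          apply one_div_le_one_div_of_le
          · positivity
          · exact hcast
        exact Metric.ball_subset_ball (h2.trans hE.le) h1
      exact Set.mem_biUnion (Finset.mem_insert_self _ _) (hball this)

end ChristensenAux

section ChristensenAux2

variable {Y : Type} [MetricSpace Y] {X : Type} [MetricSpace X]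

lemma chTrap_refine {F : Set X → Set Y} {b : Set (Completion Y)} {A : Set X}
    {ι : Type} [Countable ι] (u : ι → Set X) (huo : ∀ i, IsOpen (u i)) (huA : A ⊆ ⋃ i, u i)
    (y : Y) (hyb : (y : Completion Y) ∈ b) (hb : IsOpen b) (htrap : ChTrap F b A) :
    ∃ r > (0:ℝ), ∃ J : Finset ι,
      ChTrap F (Metric.ball (y : Completion Y) r) (⋃ i ∈ J, u i) := by
  classical
  obtain ⟨ρ, hρ, hρb⟩ := Metric.isOpen_iff.mp hb _ hyb
  by_contra hcon
  push_neg at hcon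
  obtain ⟨g, hg⟩ := exists_surjective_nat (Finset ι)
  -- counterexample compacts
  have hLe : ∀ e : ℕ, ∃ L : Set Y, IsCompact L ∧ L.Countable ∧
      ((↑) '' L : Set (Completion Y)) ⊆ Metric.ball (y : Completion Y) (min ρ (1 / (e + 1))) ∧
      ∀ Q : Set X, IsCompact Q → Q ⊆ ⋃ i ∈ g e, u i → ¬ L ⊆ F Q := by
    intro e
    have hr : (0:ℝ) < min ρ (1 / (e + 1)) := by positivity
    have h := hcon (min ρ (1 / (e + 1))) hr (g e)
    rw [ChTrap] at h
    push_neg at h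
    obtain ⟨L, hL1, hL2, hL3, hL4⟩ := h
    exact ⟨L, hL1, hL2, hL3, fun Q hQ1 hQ2 hQ3 => (hL4 Q hQ1 hQ2).elim hQ3⟩
  choose Le hLe1 hLe2 hLe3 hLe4 using hLe
  set L : Set Y := {y} ∪ ⋃ e, Le e with hLdef
  have hLcpt : IsCompact L := by
    apply isCompact_shrinking_union y Le hLe1
    intro e z hz
    have := hLe3 e (Set.mem_image_of_mem _ hz)
    rw [Metric.mem_ball] at this ⊢
    have hdist : dist z y = dist (z : Completion Y) (y : Completion Y) :=
      (UniformSpace.Completion.coe_isometry.dist_eq z y).symm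
    rw [hdist]
    exact lt_of_lt_of_le this (min_le_right _ _)
  have hLctble : L.Countable := by
    apply Set.Countable.union (Set.countable_singleton y)
    exact Set.countable_iUnion hLe2
  have hLb : ((↑) '' L : Set (Completion Y)) ⊆ b := by
    rintro _ ⟨z, hz, rfl⟩
    rcases hz with hz | hz
    · simp only [Set.mem_singleton_iff] at hz; subst hz; exact hyb
    · obtain ⟨e, hze⟩ := Set.mem_iUnion.mp hz
      apply hρb
      have := hLe3 e (Set.mem_image_of_mem _ hze)
      exact Metric.ball_subset_ball (min_le_left _ _) this
  obtain ⟨Q, hQcpt, hQA, hQF⟩ := htrap L hLcpt hLctble hLb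
  obtain ⟨J, hJ⟩ := hQcpt.elim_finite_subcover u huo (hQA.trans huA)
  obtain ⟨e, he⟩ := hg J
  refine hLe4 e Q hQcpt (by rw [he]; exact hJ) ?_
  exact (fun z hz => hQF (Or.inr (Set.mem_iUnion.mpr ⟨e, hz⟩)))

end ChristensenAux2

section ChristensenAux3

open TopologicalSpace

variable {Y : Type} [MetricSpace Y] {X : Type} [MetricSpace X]

lemma exists_fine_cover [SecondCountableTopology X] (A : Set X) (hA : IsOpen A)
    (δ : ℝ) (hδ : 0 < δ) :
    ∃ (ι : Type) (_ : Countable ι) (u : ι → Set X),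
      (∀ i, IsOpen (u i)) ∧ (∀ i, u i ⊆ A) ∧ (∀ i, ∃ c, u i ⊆ Metric.ball c δ) ∧
      A ⊆ ⋃ i, u i := by
  classical
  let P : Set (Set X) := {B ∈ countableBasis X | B ⊆ A ∧ ∃ c, B ⊆ Metric.ball c δ}
  have hPc : P.Countable := (countable_countableBasis X).mono (Set.sep_subset _ _)
  haveI : Countable ↥P := hPc.to_subtype
  refine ⟨↥P, inferInstance, fun i => (i : Set X), ?_, ?_, ?_, ?_⟩
  · rintro ⟨B, hB, -⟩
    exact (isBasis_countableBasis X).isOpen hB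
  · rintro ⟨B, -, hBA, -⟩
    exact hBA
  · rintro ⟨B, -, -, hBd⟩
    exact hBd
  · intro a ha
    have hao : a ∈ A ∩ Metric.ball a δ := ⟨ha, Metric.mem_ball_self hδ⟩
    obtain ⟨B, hB, haB, hBsub⟩ := (isBasis_countableBasis X).exists_subset_of_mem_open hao
      (hA.inter Metric.isOpen_ball)
    refine Set.mem_iUnion.mpr ⟨⟨B, hB, hBsub.trans Set.inter_subset_left,
      ⟨a, hBsub.trans Set.inter_subset_right⟩⟩, haB⟩

lemma christensen_children [SecondCountableTopology X] (F : Set X → Set Y)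
    (n : ℕ) (b : Set (Completion Y)) (A : Set X) (hbo : IsOpen b) (hAo : IsOpen A)
    (htrap : ChTrap F b A) :
    ∃ Ch : Set (Set (Completion Y) × Set X),
      (∀ μ ∈ Ch, IsOpen μ.1 ∧ IsOpen μ.2 ∧ ChTrap F μ.1 μ.2) ∧
      (∀ μ ∈ Ch, μ.1 ⊆ b ∧ μ.2 ⊆ A) ∧
      (∀ μ ∈ Ch, ∃ z : Completion Y, μ.1 ⊆ Metric.ball z ((1/2)^n)) ∧
      (∀ μ ∈ Ch, ∃ t : Set X, t.Finite ∧ μ.2 ⊆ ⋃ c ∈ t, Metric.ball c ((1/2)^n)) ∧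
      (∀ y : Y, (y : Completion Y) ∈ b → ∃ μ ∈ Ch, (y : Completion Y) ∈ μ.1) ∧
      (∀ x : Completion Y, {μ ∈ Ch | x ∈ μ.1}.Finite) := by
  classical
  have hhalf : (0:ℝ) < (1/2)^n := by positivity
  obtain ⟨ι, hιc, u, huo, huA, hufine, hucov⟩ := exists_fine_cover A hAo ((1/2)^n) hhalf
  haveI : Countable ι := hιc
  -- good pairs
  set GP : Set (Set (Completion Y) × Set X) :=
    {p | IsOpen p.1 ∧ p.1 ⊆ b ∧ (∃ z, p.1 ⊆ Metric.ball z ((1/2)^n)) ∧ IsOpen p.2 ∧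
      p.2 ⊆ A ∧ (∃ t : Set X, t.Finite ∧ p.2 ⊆ ⋃ c ∈ t, Metric.ball c ((1/2)^n)) ∧
      ChTrap F p.1 p.2} with hGP
  -- every point of b with a Y-preimage is in the first component of a good pair
  have hcover : ∀ y : Y, (y : Completion Y) ∈ b → ∃ p : GP, (y : Completion Y) ∈ p.val.1 := by
    intro y hyb
    obtain ⟨r, hr, J, hJtrap⟩ := chTrap_refine u huo hucov y hyb hbo htrap
    set r' : ℝ := min r ((1/2)^n) with hr'
    have hr'0 : 0 < r' := lt_min hr hhalf
    refine ⟨⟨(b ∩ Metric.ball (y : Completion Y) r', ⋃ i ∈ J, u i), ?_⟩,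
      ⟨hyb, Metric.mem_ball_self hr'0⟩⟩
    refine ⟨hbo.inter Metric.isOpen_ball, Set.inter_subset_left,
      ⟨(y : Completion Y), Set.inter_subset_right.trans
        (Metric.ball_subset_ball (min_le_right _ _))⟩,
      isOpen_biUnion (fun i _ => huo i),
      Set.iUnion₂_subset (fun i _ => huA i), ?_, ?_⟩
    · refine ⟨(fun i => Classical.choose (hufine i)) '' J, (J.finite_toSet.image _), ?_⟩
      intro z hz
      obtain ⟨i, hiJ, hzi⟩ := Set.mem_iUnion₂.mp hz
      have := Classical.choose_spec (hufine i) hzi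
      exact Set.mem_biUnion (Set.mem_image_of_mem _ hiJ) this
    · exact hJtrap.mono (Set.inter_subset_right.trans
        (Metric.ball_subset_ball (min_le_left _ _))) subset_rfl
  -- the open set covered by good pairs, and a locally finite refinement on it
  set b0 : Set (Completion Y) := ⋃ p : GP, p.val.1 with hb0
  have hb0o : IsOpen b0 := isOpen_iUnion (fun p => p.prop.1)
  have hw : ⋃ p : GP, ((Subtype.val : b0 → Completion Y) ⁻¹' p.val.1) = Set.univ := by
    rw [← Set.preimage_iUnion]
    exact Set.eq_univ_of_forall (fun z => z.2)
  obtain ⟨v, hvo, hvcov, hvlf, hvsub⟩ := precise_refinement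
    (fun p : GP => (Subtype.val : b0 → Completion Y) ⁻¹' p.val.1)
    (fun p => (p.prop.1).preimage continuous_subtype_val) hw
  set node : GP → Set (Completion Y) × Set X :=
    fun p => ((Subtype.val '' v p : Set (Completion Y)), p.val.2) with hnode
  have himg : ∀ p : GP, (Subtype.val '' v p : Set (Completion Y)) ⊆ p.val.1 := by
    intro p
    refine (Set.image_mono (hvsub p)).trans ?_
    rintro _ ⟨z, hz, rfl⟩; exact hz
  refine ⟨Set.range node, ?_, ?_, ?_, ?_, ?_, ?_⟩
  · rintro μ ⟨p, rfl⟩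
    exact ⟨hb0o.isOpenMap_subtype_val _ (hvo p), p.prop.2.2.2.1,
      (p.prop.2.2.2.2.2.2).mono (himg p) subset_rfl⟩
  · rintro μ ⟨p, rfl⟩
    exact ⟨(himg p).trans p.prop.2.1, p.prop.2.2.2.2.1⟩
  · rintro μ ⟨p, rfl⟩
    obtain ⟨z, hz⟩ := p.prop.2.2.1
    exact ⟨z, (himg p).trans hz⟩
  · rintro μ ⟨p, rfl⟩
    exact p.prop.2.2.2.2.2.1
  · intro y hyb
    obtain ⟨p, hp⟩ := hcover y hyb
    have hyb0 : ((y : Completion Y)) ∈ b0 := Set.mem_iUnion.mpr ⟨p, hp⟩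
    have : (⟨_, hyb0⟩ : b0) ∈ ⋃ q : GP, v q := by rw [hvcov]; trivial
    obtain ⟨q, hq⟩ := Set.mem_iUnion.mp this
    exact ⟨node q, ⟨q, rfl⟩, Set.mem_image_of_mem _ hq⟩
  · intro x
    by_cases hx : x ∈ b0
    · obtain ⟨t, ht, htfin⟩ := hvlf ⟨x, hx⟩
      refine Set.Finite.subset (htfin.image node) ?_
      rintro μ ⟨⟨p, rfl⟩, hxμ⟩
      obtain ⟨z, hzv, hzx⟩ := hxμ
      have hzeq : z = ⟨x, hx⟩ := Subtype.ext hzx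
      rw [hzeq] at hzv
      exact Set.mem_image_of_mem _ ⟨⟨x, hx⟩, hzv, mem_of_mem_nhds ht⟩
    · refine Set.Finite.subset (Set.finite_empty) ?_
      rintro μ ⟨⟨p, rfl⟩, hxμ⟩
      obtain ⟨z, -, hzx⟩ := hxμ
      exact absurd (hzx ▸ z.2) hx

end ChristensenAux3

section ChristensenMain

variable {Y : Type} [MetricSpace Y] {X : Type} [MetricSpace X]
  [SecondCountableTopology X] [CompleteSpace X]

lemma christensen_gdelta (F : Set X → Set Y)
    (hFc : ∀ K : Set X, IsCompact K → IsCompact (F K))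
    (hFm : ∀ K L : Set X, IsCompact K → IsCompact L → K ⊆ L → F K ⊆ F L)
    (hFcof : ∀ L : Set Y, IsCompact L → L.Countable → ∃ K, IsCompact K ∧ L ⊆ F K) :
    ∃ W : ℕ → Set (Completion Y), (∀ n, IsOpen (W n)) ∧
      Set.range ((↑) : Y → Completion Y) = ⋂ n, W n := by
  classical
  set Node := Set (Completion Y) × Set X with hNode
  set NodeOK : Node → Prop := fun ν => IsOpen ν.1 ∧ IsOpen ν.2 ∧ ChTrap F ν.1 ν.2 with hNodeOK
  -- children choice
  set chooseCh : ℕ → Node → Set Node := fun n ν =>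
    if h : NodeOK ν then (christensen_children F n ν.1 ν.2 h.1 h.2.1 h.2.2).choose
    else ∅ with hchooseCh
  have hCh : ∀ n (ν : Node), NodeOK ν →
      (∀ μ ∈ chooseCh n ν, NodeOK μ) ∧
      (∀ μ ∈ chooseCh n ν, μ.1 ⊆ ν.1 ∧ μ.2 ⊆ ν.2) ∧
      (∀ μ ∈ chooseCh n ν, ∃ z : Completion Y, μ.1 ⊆ Metric.ball z ((1/2)^n)) ∧
      (∀ μ ∈ chooseCh n ν, ∃ t : Set X, t.Finite ∧ μ.2 ⊆ ⋃ c ∈ t, Metric.ball c ((1/2)^n)) ∧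
      (∀ y : Y, (y : Completion Y) ∈ ν.1 → ∃ μ ∈ chooseCh n ν, (y : Completion Y) ∈ μ.1) ∧
      (∀ x : Completion Y, {μ ∈ chooseCh n ν | x ∈ μ.1}.Finite) := by
    intro n ν h
    have hspec := (christensen_children F n ν.1 ν.2 h.1 h.2.1 h.2.2).choose_spec
    rw [hchooseCh]
    simp only [dif_pos h]
    exact ⟨fun μ hμ => ⟨(hspec.1 μ hμ).1, (hspec.1 μ hμ).2.1, (hspec.1 μ hμ).2.2⟩,
      hspec.2.1, hspec.2.2.1, hspec.2.2.2.1, hspec.2.2.2.2.1, hspec.2.2.2.2.2⟩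
  -- the root
  set root : Node := (Set.univ, Set.univ) with hroot
  have hrootOK : NodeOK root := by
    refine ⟨isOpen_univ, isOpen_univ, ?_⟩
    intro L hL hLc _
    obtain ⟨K, hK1, hK2⟩ := hFcof L hL hLc
    exact ⟨K, hK1, Set.subset_univ _, hK2⟩
  -- levels: sets of chains (current node, history)
  set S : ℕ → Set (Node × List Node) := fun n => Nat.rec {(root, ([] : List Node))}
    (fun n Sn => {p | ∃ μ ν t, p = (μ, ν :: t) ∧ (ν, t) ∈ Sn ∧ μ ∈ chooseCh n ν}) n
    with hS
  have hS0 : S 0 = {(root, ([] : List Node))} := rfl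
  have hSsucc : ∀ n, S (n+1) =
      {p | ∃ μ ν t, p = (μ, ν :: t) ∧ (ν, t) ∈ S n ∧ μ ∈ chooseCh n ν} := fun n => rfl
  -- basic invariants
  have hSOK : ∀ n, ∀ p ∈ S n, NodeOK p.1 := by
    intro n
    induction n with
    | zero => rintro p hp; rw [hS0] at hp; rw [Set.mem_singleton_iff] at hp; subst hp
              exact hrootOK
    | succ n ih =>
        rintro p hp
        rw [hSsucc] at hp
        obtain ⟨μ, ν, t, rfl, hνt, hμ⟩ := hp
        exact (hCh n ν (ih _ hνt)).1 μ hμ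
  have hSlen : ∀ n, ∀ p ∈ S n, p.2.length = n := by
    intro n
    induction n with
    | zero => rintro p hp; rw [hS0] at hp; rw [Set.mem_singleton_iff] at hp; subst hp; rfl
    | succ n ih =>
        rintro p hp
        rw [hSsucc] at hp
        obtain ⟨μ, ν, t, rfl, hνt, hμ⟩ := hp
        simp [ih _ hνt]
  -- every element of the chain contains the ball of the current node
  have hSmem : ∀ n, ∀ p ∈ S n, ∀ ρ ∈ (p.1 :: p.2), p.1.1 ⊆ ρ.1 := by
    intro n
    induction n with
    | zero =>
        rintro p hp ρ hρ
        rw [hS0] at hp; rw [Set.mem_singleton_iff] at hp; subst hp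
        simp only [List.mem_cons, List.not_mem_nil, or_false] at hρ
        subst hρ; exact subset_rfl
    | succ n ih =>
        rintro p hp ρ hρ
        rw [hSsucc] at hp
        obtain ⟨μ, ν, t, rfl, hνt, hμ⟩ := hp
        have hsub : μ.1 ⊆ ν.1 := ((hCh n ν (hSOK n _ hνt)).2.1 μ hμ).1
        simp only [List.mem_cons] at hρ
        rcases hρ with rfl | hρ
        · exact subset_rfl
        · exact hsub.trans (ih (ν, t) hνt ρ (by simpa using hρ))
  -- truncation
  have htrunc : ∀ k n, ∀ p ∈ S (n + k), ∃ q ∈ S n, (q.1 :: q.2) <:+ (p.1 :: p.2) := by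
    intro k
    induction k with
    | zero => intro n p hp; exact ⟨p, hp, List.suffix_refl _⟩
    | succ k ih =>
        intro n p hp
        rw [show n + (k+1) = (n+k) + 1 by omega, hSsucc] at hp
        obtain ⟨μ, ν, t, rfl, hνt, hμ⟩ := hp
        obtain ⟨q, hq, hsuff⟩ := ih n (ν, t) hνt
        exact ⟨q, hq, hsuff.trans (List.suffix_cons _ _)⟩
  -- the Gδ levels
  refine ⟨fun n => ⋃ p ∈ S n, (p : Node × List Node).1.1, ?_, ?_⟩
  · intro n
    exact isOpen_biUnion (fun p hp => (hSOK n p hp).1)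
  apply Set.Subset.antisymm
  · -- range ⊆ ⋂ Wₙ
    rintro _ ⟨y, rfl⟩
    rw [Set.mem_iInter]
    intro n
    induction n with
    | zero =>
        exact Set.mem_biUnion (by rw [hS0]; exact rfl) (Set.mem_univ _)
    | succ n ih =>
        obtain ⟨p, hp, hyp⟩ := Set.mem_iUnion₂.mp ih
        obtain ⟨μ, hμ, hyμ⟩ := (hCh n p.1 (hSOK n p hp)).2.2.2.2.1 y hyp
        refine Set.mem_biUnion (?_ : (μ, p.1 :: p.2) ∈ S (n+1)) hyμ
        rw [hSsucc]
        exact ⟨μ, p.1, p.2, rfl, hp, hμ⟩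
  · -- ⋂ Wₙ ⊆ range : the hard direction
    intro x hx
    rw [Set.mem_iInter] at hx
    have hW : ∀ n, ∃ p ∈ S n, x ∈ (p : Node × List Node).1.1 := by
      intro n
      obtain ⟨p, hp, hxp⟩ := Set.mem_iUnion₂.mp (hx n)
      exact ⟨p, hp, hxp⟩
    -- goodness: witnesses with arbitrarily deep witness-extensions
    set good : ℕ → Node × List Node → Prop := fun n p =>
      p ∈ S n ∧ x ∈ p.1.1 ∧ (∀ m, n ≤ m → ∃ q : Node × List Node, q ∈ S m ∧ x ∈ q.1.1 ∧
        (p.1 :: p.2) <:+ (q.1 :: q.2)) with hgood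
    -- extensions can be truncated to any intermediate level
    have hextend : ∀ (r : List Node) (m m' : ℕ), m ≤ m' → r.length ≤ m + 1 →
        (∃ q : Node × List Node, q ∈ S m' ∧ x ∈ q.1.1 ∧ r <:+ (q.1 :: q.2)) →
        (∃ q : Node × List Node, q ∈ S m ∧ x ∈ q.1.1 ∧ r <:+ (q.1 :: q.2)) := by
      intro r m m' hmm' hlen ⟨q, hq, hxq, hsuff⟩
      obtain ⟨q0, hq0, hsuff0⟩ := htrunc (m' - m) m q (by
        rw [show m + (m' - m) = m' by omega]; exact hq)
      have hq0len : (q0.1 :: q0.2).length = m + 1 := by simp [hSlen m q0 hq0]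
      have hqlen : (q.1 :: q.2).length = m' + 1 := by simp [hSlen m' q hq]
      refine ⟨q0, hq0, ?_, ?_⟩
      · exact hSmem m' q hq q0.1 (hsuff0.subset (List.mem_cons_self)) hxq
      · refine List.suffix_of_suffix_length_le hsuff hsuff0 ?_
        rw [hq0len]; exact hlen
    have hrootgood : good 0 (root, ([] : List Node)) := by
      refine ⟨by rw [hS0]; rfl, Set.mem_univ x, ?_⟩
      intro m _
      obtain ⟨q, hq, hxq⟩ := hW m
      obtain ⟨q0, hq0, hsuff⟩ := htrunc m 0 q (by rw [Nat.zero_add]; exact hq)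
      rw [hS0, Set.mem_singleton_iff] at hq0
      refine ⟨q, hq, hxq, ?_⟩
      rw [show ((root, ([] : List Node)).1 :: (root, ([] : List Node)).2)
        = (q0.1 :: q0.2) by rw [hq0]]
      exact hsuff
    have hstep : ∀ n p, good n p → ∃ μ, μ ∈ chooseCh n p.1 ∧ x ∈ μ.1 ∧
        good (n+1) (μ, p.1 :: p.2) := by
      intro n p hp
      have hpS := hp.1
      have hpx := hp.2.1
      have hpext := hp.2.2
      have hplen : (p.1 :: p.2).length = n + 1 := by simp [hSlen n p hpS]
      by_contra hcon
      push_neg at hcon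
      have hbad : ∀ μ, μ ∈ chooseCh n p.1 → x ∈ μ.1 → ∃ m, n + 1 ≤ m ∧
          ¬ ∃ q : Node × List Node, q ∈ S m ∧ x ∈ q.1.1 ∧
            (μ :: p.1 :: p.2) <:+ (q.1 :: q.2) := by
        intro μ hμ hxμ
        have hng := hcon μ hμ hxμ
        rw [hgood] at hng
        simp only [not_and] at hng
        have hμS : (μ, p.1 :: p.2) ∈ S (n+1) := by
          rw [hSsucc]; exact ⟨μ, p.1, p.2, rfl, hpS, hμ⟩
        have := hng hμS hxμ
        push_neg at this
        obtain ⟨m, hm1, hm2⟩ := this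
        exact ⟨m, hm1, by simpa using hm2⟩
      choose! mb hmb1 hmb2 using hbad
      set C : Set Node := {μ ∈ chooseCh n p.1 | x ∈ μ.1} with hC
      have hCfin : C.Finite := (hCh n p.1 (hSOK n p hpS)).2.2.2.2.2 x
      set M : ℕ := (hCfin.toFinset.sup mb) + n + 1 with hM
      have hMge : ∀ μ ∈ C, mb μ ≤ M := by
        intro μ hμ
        have := Finset.le_sup (f := mb) (hCfin.mem_toFinset.mpr hμ)
        omega
      obtain ⟨q, hq, hxq, hsuffp⟩ := hpext M (by omega)
      -- truncate to level n+1
      obtain ⟨q1, hq1, hsuffq1⟩ := htrunc (M - (n+1)) (n+1) q (by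
        rw [show (n+1) + (M - (n+1)) = M by omega]; exact hq)
      have hq1len : (q1.1 :: q1.2).length = n + 2 := by simp [hSlen (n+1) q1 hq1]
      have hxq1 : x ∈ q1.1.1 :=
        hSmem M q hq q1.1 (hsuffq1.subset (List.mem_cons_self)) hxq
      have hsuffpq1 : (p.1 :: p.2) <:+ (q1.1 :: q1.2) := by
        refine List.suffix_of_suffix_length_le hsuffp hsuffq1 (by omega)
      -- decompose q1
      have hq1' := hq1
      rw [hSsucc] at hq1'
      obtain ⟨μ, ν, t, heq, hνt, hμ⟩ := hq1'
      have hνtlist : (p.1 :: p.2) = (ν :: t) := by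
        have h1 : (ν :: t) <:+ (q1.1 :: q1.2) := by
          rw [heq]; exact List.suffix_cons _ _
        have h2 : (ν :: t).length = n + 1 := by
          have h3 : t.length = n := hSlen n (ν, t) hνt
          simp [h3]

        refine List.IsSuffix.eq_of_length ?_ (by rw [hplen, h2])
        exact List.suffix_of_suffix_length_le hsuffpq1 h1 (by omega)
      have hν : ν = p.1 := by injection hνtlist with h1 h2; exact h1.symm
      have ht : t = p.2 := by injection hνtlist with h1 h2; exact h2.symm
      subst hν; subst ht
      have hμC : μ ∈ C := ⟨hμ, by rw [heq] at hxq1; exact hxq1⟩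
      -- contradiction: μ has an extension at level mb μ
      refine hmb2 μ hμ (by rw [heq] at hxq1; exact hxq1) ?_
      refine hextend (μ :: p.1 :: p.2) (mb μ) M (hMge μ hμC) ?_ ?_
      · have hb1 := hmb1 μ hμ (by rw [heq] at hxq1; exact hxq1)
        have hp2 : p.2.length = n := hSlen n p hpS
        simp only [List.length_cons]
        omega
      · refine ⟨q, hq, hxq, ?_⟩
        rw [show (μ :: p.1 :: p.2) = (q1.1 :: q1.2) by rw [heq]]
        exact hsuffq1
    -- construct the branch
    let B : (n : ℕ) → {p : Node × List Node // good n p} := fun n =>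
      Nat.rec ⟨(root, ([] : List Node)), hrootgood⟩
        (fun n prev => ⟨((hstep n prev.1 prev.2).choose, prev.1.1 :: prev.1.2),
          (hstep n prev.1 prev.2).choose_spec.2.2⟩) n
    set ν : ℕ → Node := fun n => (B n).1.1 with hν
    have hνx : ∀ n, x ∈ (ν n).1 := fun n => (B n).2.2.1
    have hνS : ∀ n, (B n).1 ∈ S n := fun n => (B n).2.1
    have hνOK : ∀ n, NodeOK (ν n) := fun n => hSOK n (B n).1 (hνS n)
    have hνch : ∀ n, ν (n+1) ∈ chooseCh n (ν n) := by
      intro n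
      exact (hstep n (B n).1 (B n).2).choose_spec.1
    -- child properties along the branch
    have hsub1 : ∀ n, (ν (n+1)).1 ⊆ (ν n).1 :=
      fun n => ((hCh n (ν n) (hνOK n)).2.1 _ (hνch n)).1
    have hsub2 : ∀ n, (ν (n+1)).2 ⊆ (ν n).2 :=
      fun n => ((hCh n (ν n) (hνOK n)).2.1 _ (hνch n)).2
    have hball : ∀ n, ∃ z : Completion Y, (ν (n+1)).1 ⊆ Metric.ball z ((1/2)^n) :=
      fun n => (hCh n (ν n) (hνOK n)).2.2.1 _ (hνch n)
    have hfine : ∀ n, ∃ t : Set X, t.Finite ∧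
        (ν (n+1)).2 ⊆ ⋃ c ∈ t, Metric.ball c ((1/2)^n) :=
      fun n => (hCh n (ν n) (hνOK n)).2.2.2.1 _ (hνch n)
    have htrapn : ∀ n, ChTrap F (ν n).1 (ν n).2 := fun n => (hνOK n).2.2
    have hsub2' : ∀ j k, j ≤ k → (ν k).2 ⊆ (ν j).2 := by
      intro j k hjk
      induction k with
      | zero => rw [Nat.le_zero.mp hjk]
      | succ k ih =>
          rcases Nat.lt_or_ge j (k+1) with h | h
          · exact (hsub2 k).trans (ih (by omega))
          · rw [le_antisymm hjk h]
    -- pick points of Y in the branch balls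
    have hwm : ∀ m : ℕ, ∃ w : Y, (w : Completion Y) ∈ (ν (m+1)).1 := by
      intro m
      have : ((ν (m+1)).1 ∩ Set.range ((↑) : Y → Completion Y)).Nonempty := by
        apply Dense.inter_open_nonempty
        · exact UniformSpace.Completion.denseRange_coe
        · exact (hνOK (m+1)).1
        · exact ⟨x, hνx (m+1)⟩
      obtain ⟨z, hz1, ⟨w, rfl⟩⟩ := this
      exact ⟨w, hz1⟩
    choose w hw using hwm
    -- the points converge to x
    have hconv : Filter.Tendsto (fun m => ((w m : Completion Y))) Filter.atTop (nhds x) := by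
      rw [Metric.tendsto_atTop]
      intro ε hε
      obtain ⟨N, hN⟩ := exists_pow_lt_of_lt_one (by positivity : (0:ℝ) < ε/2) (by norm_num : (1:ℝ)/2 < 1)
      refine ⟨N, fun m hm => ?_⟩
      obtain ⟨z, hz⟩ := hball m
      have h1 : dist ((w m : Completion Y)) z < (1/2)^m := Metric.mem_ball.mp (hz (hw m))
      have h2 : dist x z < (1/2)^m := Metric.mem_ball.mp (hz (hνx (m+1)))
      have h3 : ((1:ℝ)/2)^m ≤ (1/2)^N :=
        pow_le_pow_of_le_one (by norm_num) (by norm_num) hm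
      calc dist ((w m : Completion Y)) x ≤ dist ((w m : Completion Y)) z + dist z x :=
            dist_triangle _ _ _
        _ < (1/2)^m + (1/2)^m := by rw [dist_comm z x]; exact add_lt_add h1 h2
        _ ≤ (1/2)^N + (1/2)^N := add_le_add h3 h3
        _ < ε/2 + ε/2 := add_lt_add hN hN
        _ = ε := by ring
    -- trap the pairs
    have hpair : ∀ k : ℕ, ∃ Q : Set X, IsCompact Q ∧ Q ⊆ (ν (k+1)).2 ∧
        ({w k, w (k+1)} : Set Y) ⊆ F Q := by
      intro k
      apply htrapn (k+1)
      · exact (Set.finite_singleton _).insert _ |>.isCompact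
      · exact ((Set.countable_singleton _).insert _)
      · rintro _ ⟨z, hz, rfl⟩
        rcases hz with rfl | hz
        · exact hw k
        · rw [Set.mem_singleton_iff] at hz; subst hz
          exact hsub1 (k+1) (hw (k+1))
    choose Q hQc hQsub hQF using hpair
    -- the union of the Q's has compact closure
    have hTB : TotallyBounded (⋃ k, Q k) := by
      rw [Metric.totallyBounded_iff]
      intro ε hε
      obtain ⟨j, hj⟩ := exists_pow_lt_of_lt_one hε (by norm_num : (1:ℝ)/2 < 1)
      obtain ⟨t, htfin, htsub⟩ := hfine j
      have hhead : IsCompact (⋃ k ∈ Finset.range (j+1), Q k) :=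
        (Finset.range (j+1)).isCompact_biUnion (fun k _ => hQc k)
      obtain ⟨t0, ht0fin, ht0sub⟩ := Metric.totallyBounded_iff.mp hhead.totallyBounded ε hε
      refine ⟨t0 ∪ t, ht0fin.union htfin, ?_⟩
      rintro z hz
      obtain ⟨k, hzk⟩ := Set.mem_iUnion.mp hz
      rcases Nat.lt_or_ge k (j+1) with h | h
      · have : z ∈ ⋃ k ∈ Finset.range (j+1), Q k :=
          Set.mem_biUnion (Finset.mem_range.mpr h) hzk
        obtain ⟨c, hc, hzc⟩ := Set.mem_iUnion₂.mp (ht0sub this)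
        exact Set.mem_biUnion (Set.mem_union_left _ hc) hzc
      · have hzA : z ∈ (ν (j+1)).2 := hsub2' (j+1) (k+1) (by omega) (hQsub k hzk)
        obtain ⟨c, hc, hzc⟩ := Set.mem_iUnion₂.mp (htsub hzA)
        refine Set.mem_biUnion (Set.mem_union_right _ hc) ?_
        exact Metric.ball_subset_ball hj.le hzc
    set D : Set X := closure (⋃ k, Q k) with hD
    have hDc : IsCompact D := TotallyBounded.isCompact_of_isClosed hTB.closure isClosed_closure
    have hwFD : ∀ k, w k ∈ F D := by
      intro k
      apply hFm (Q k) D (hQc k) hDc ((Set.subset_iUnion Q k).trans subset_closure)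
      exact hQF k (Set.mem_insert _ _)
    -- conclude
    have hFDc : IsCompact (((↑) : Y → Completion Y) '' (F D)) :=
      (hFc D hDc).image (UniformSpace.Completion.continuous_coe Y)
    have hxmem : x ∈ ((↑) : Y → Completion Y) '' (F D) := by
      refine hFDc.isClosed.mem_of_tendsto hconv ?_
      exact Filter.Eventually.of_forall (fun k => Set.mem_image_of_mem _ (hwFD k))
    obtain ⟨y0, -, hy0⟩ := hxmem
    exact ⟨y0, hy0⟩

end ChristensenMain

section GdeltaPolish

/-- A countable intersection of open subsets of a Polish space is Polish. -/
lemma polishSpace_iInter_opens {M : Type} [TopologicalSpace M] [PolishSpace M]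
    (W : ℕ → Set M) (hW : ∀ n, IsOpen (W n)) : PolishSpace ↥(⋂ n, W n) := by
  haveI : ∀ n, PolishSpace ↥(W n) := fun n => (hW n).polishSpace
  haveI hpi : PolishSpace (∀ n : ℕ, ↥(W n)) := inferInstance
  set s : Set M := ⋂ n, W n with hs
  have hsub : ∀ (z : ↥s) (n : ℕ), (z : M) ∈ W n := by
    intro z n
    exact Set.mem_iInter.mp z.2 n
  set e : ↥s → ∀ n : ℕ, ↥(W n) := fun z n => ⟨(z : M), hsub z n⟩ with he
  have hcont : Continuous e := by
    apply continuous_pi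
    intro n
    exact Continuous.subtype_mk continuous_subtype_val _
  have hinj : Function.Injective e := by
    intro a b hab
    have := congrArg (fun f => ((f 0 : ↥(W 0)) : M)) hab
    exact Subtype.ext this
  have hgcont : Continuous (fun f : (∀ n : ℕ, ↥(W n)) => ((f 0 : ↥(W 0)) : M)) :=
    continuous_subtype_val.comp (continuous_apply 0)
  have hind : Topology.IsInducing e := by
    refine Topology.IsInducing.of_comp hcont hgcont ?_
    exact (Topology.IsInducing.subtypeVal :
      Topology.IsInducing (Subtype.val : ↥s → M))
  have hclosed : IsClosed (Set.range e) := by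
    have hre : Set.range e = ⋂ n : ℕ, {f : ∀ k : ℕ, ↥(W k) | ((f n : M)) = ((f 0 : M))} := by
      ext f
      constructor
      · rintro ⟨z, rfl⟩
        rw [Set.mem_iInter]
        intro n
        rfl
      · intro hf
        have hfn : ∀ n, ((f n : M)) = ((f 0 : M)) := fun n => Set.mem_iInter.mp hf n
        have h0 : ((f 0 : M)) ∈ s := by
          rw [hs, Set.mem_iInter]
          intro n
          rw [← hfn n]
          exact (f n).2
        refine ⟨⟨(f 0 : M), h0⟩, ?_⟩
        funext n
        exact Subtype.ext (hfn n).symm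
    rw [hre]
    apply isClosed_iInter
    intro n
    apply isClosed_eq
    · exact continuous_subtype_val.comp (continuous_apply n)
    · exact continuous_subtype_val.comp (continuous_apply 0)
  have hce : Topology.IsClosedEmbedding e := ⟨⟨hind, hinj⟩, hclosed⟩
  exact hce.polishSpace

end GdeltaPolish

section ChristensenGlue

open TopologicalSpace

lemma christensen_polish {Y : Type} [ty : TopologicalSpace Y]
    [TopologicalSpace.SeparableSpace Y] [TopologicalSpace.MetrizableSpace Y]
    {X : Type} [tX : TopologicalSpace X] [hX : PolishSpace X]
    (F : Set X → Set Y)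
    (hFc : ∀ K : Set X, IsCompact K → IsCompact (F K))
    (hFm : ∀ K L : Set X, IsCompact K → IsCompact L → K ⊆ L → F K ⊆ F L)
    (hFcof : ∀ L : Set Y, IsCompact L → L.Countable → ∃ K, IsCompact K ∧ L ⊆ F K) :
    PolishSpace Y := by
  letI m0 : MetricSpace Y := TopologicalSpace.metrizableSpaceMetric Y
  letI mX : UpgradedIsCompletelyMetrizableSpace X := upgradeIsCompletelyMetrizable X
  obtain ⟨W, hWo, hWeq⟩ := christensen_gdelta F hFc hFm hFcof
  haveI : TopologicalSpace.SeparableSpace (Completion Y) :=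
    UniformSpace.Completion.denseRange_coe.separableSpace
      (UniformSpace.Completion.continuous_coe Y)
  haveI : PolishSpace (Completion Y) := inferInstance
  haveI hPr : PolishSpace ↥(Set.range ((↑) : Y → Completion Y)) := by
    rw [hWeq]; exact polishSpace_iInter_opens W hWo
  set f : Y → ↥(Set.range ((↑) : Y → Completion Y)) :=
    Set.rangeFactorization ((↑) : Y → Completion Y) with hf
  have hcoeEmb : Topology.IsEmbedding ((↑) : Y → Completion Y) :=
    UniformSpace.Completion.coe_isometry.isEmbedding
  have hfc : Continuous f :=
    Continuous.subtype_mk (UniformSpace.Completion.continuous_coe Y) _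
  have hfind : Topology.IsInducing f :=
    Topology.IsInducing.of_comp hfc continuous_subtype_val hcoeEmb.toIsInducing
  have hfinj : Function.Injective f := by
    intro a b hab
    exact hcoeEmb.injective (congrArg Subtype.val hab)
  have hfce : Topology.IsClosedEmbedding f := by
    refine ⟨⟨hfind, hfinj⟩, ?_⟩
    rw [Set.rangeFactorization_surjective.range_eq]
    exact isClosed_univ
  exact hfce.polishSpace

end ChristensenGlue

end ChristensenAuxAll

/-- Christensen's theorem with countable cofinality (condition (2)_c). -/
theorem stmt1 {Y : Type} [TopologicalSpace Y] [T35Space Y]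
    [TopologicalSpace.SeparableSpace Y] [TopologicalSpace.MetrizableSpace Y] :
    CompletelyMetrizable Y ↔
      ∃ (X : Type) (tX : TopologicalSpace X), @PolishSpace X tX ∧
        ∃ F : Set X → Set Y,
          (∀ K : Set X, @IsCompact X tX K → IsCompact (F K)) ∧
          @CondMonotone X Y tX _ F ∧
          @CondCofinalCtble X Y tX _ F := by
  constructor
  · intro h
    refine ⟨Y, ‹_›, ?_, fun K => K, fun K hK => hK, fun K L _ _ hKL => hKL,
      fun L hL _ => ⟨L, hL, subset_rfl⟩⟩
    have hsc : SecondCountableTopology Y := by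
      letI := TopologicalSpace.metrizableSpaceMetric Y
      exact UniformSpace.secondCountable_of_separable Y
    exact { toSecondCountableTopology := hsc, complete := h }
  · rintro ⟨X, tX, hX, F, hFc, hFm, hFcof⟩
    letI := tX
    haveI := hX
    exact (christensen_polish F hFc hFm hFcof).complete
end

section
/- Let F : X → 2^Y be a generalized tri-quotient map. Then the map Φ : 2^X → 2^Y defined by Φ(A) = cl_Y(F(A)), where F(A) = ⋃{F(x) : x ∈ A}, is a monotone set tri-quotient map (with S(X) = 2^X). -/
open Set Filter Topology

universe u v

/-- Lemma 2.1: if `F : X → 2^Y` is generalized tri-quotient, then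
`Φ(A) = cl_Y(F(A))` is a monotone set tri-quotient map with `S(X) = 2^X`. -/
theorem stmt5 {X : Type u} {Y : Type v} [TopologicalSpace X] [TopologicalSpace Y]
    [T35Space X] [T35Space Y]
    (F : X → Set Y) (hF : GenTriQuotient F) :
    (∀ A B : Set X, A ⊆ B → closure (⋃ x ∈ A, F x) ⊆ closure (⋃ x ∈ B, F x)) ∧
    SetTriQuotient Set.univ (fun A : Set X => closure (⋃ x ∈ A, F x)) := by
  obtain ⟨t, ht_open, ht_sub, ht_univ, ht_mono, ht_cov⟩ := hF
  constructor
  · intro A B hAB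
    apply closure_mono
    exact Set.biUnion_subset_biUnion_left hAB
  refine ⟨t, ht_open, ?_, ht_univ, ht_mono, ?_⟩
  · intro U hU y hy
    obtain ⟨x, hxU, hyF⟩ := Set.mem_iUnion₂.1 (ht_sub U hU hy)
    refine Set.mem_iUnion₂.2 ⟨{x}, ⟨Set.mem_univ _, Set.singleton_subset_iff.2 hxU⟩, ?_⟩
    exact subset_closure (Set.mem_iUnion₂.2 ⟨x, rfl, hyF⟩)
  · intro U hU y hy W hW hcov
    apply ht_cov U hU y hy W hW
    intro x hx
    apply hcov
    refine Set.mem_iUnion₂.2 ⟨{x}, ⟨Set.mem_univ _, ?_, Set.singleton_subset_iff.2 hx.1⟩, rfl⟩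
    exact subset_closure (Set.mem_iUnion₂.2 ⟨x, rfl, hx.2⟩)
end

section
/- If f : X → Y is a (single-valued, continuous) tri-quotient map, then the map F : K(X) → K(Y) defined by F(K) = f(K) for K ∈ K(X) is a monotone set tri-quotient map. -/
open Set Filter Topology

universe u v

/-- Every tri-quotient map `f : X → Y` generates a monotone set tri-quotient map
`F : K(X) → K(Y)`, `F(K) = f(K)`. -/
theorem stmt6 {X : Type u} {Y : Type v} [TopologicalSpace X] [TopologicalSpace Y]
    [T35Space X] [T35Space Y]
    (f : X → Y) (hf : TriQuotient f) :
    CondMonotone (fun K : Set X => f '' K) ∧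
    SetTriQuotient {K : Set X | IsCompact K} (fun K : Set X => f '' K) := by
  obtain ⟨hc, hs, t, ht_open, ht_sub, ht_univ, ht_mono, ht_cov⟩ := hf
  refine ⟨fun K L _ _ hKL => Set.image_mono hKL, t, ht_open, ?_, ht_univ, fun U V hU hV h => ht_mono U V hU hV h, ?_⟩
  · intro U hU y hy
    obtain ⟨x, hxU, hxy⟩ := ht_sub U hU hy
    exact Set.mem_biUnion ⟨isCompact_singleton, Set.singleton_subset_iff.2 hxU⟩
      ⟨x, rfl, hxy⟩
  · intro U hU y hy W hW hcov
    apply ht_cov U hU y hy W hW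
    intro x ⟨hxy, hxU⟩
    apply hcov
    exact Set.mem_biUnion (show ({x} : Set X) ∈ _ from ⟨isCompact_singleton, ⟨x, rfl, hxy⟩, Set.singleton_subset_iff.2 hxU⟩) rfl
end

section
/- Let X be a Lindelöf space, Y a μ-complete q-space, and F : K(X) → K(Y) a map satisfying conditions (1) and (2). Then F is a monotone set tri-quotient map. -/
open Set Filter Topology

universe u v

/-- Auxiliary: a union of compact sets chosen inside the q-space neighborhoods is bounded. -/
lemma bounded_iUnion_aux {Y : Type v} [TopologicalSpace Y]
    (Q : ℕ → Set Y)
    (hq : ∀ z : ℕ → Y, (∀ n, z n ∈ Q n) → ∃ p : Y, MapClusterPt p atTop z)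
    (L : ℕ → Set Y) (hLc : ∀ n, IsCompact (L n))
    (hLQ : ∀ n i, i ≤ n → L n ⊆ Q i) :
    BoundedSubset (⋃ n, L n) := by
  intro f hf
  by_contra hcon
  push_neg at hcon
  have key : ∀ m : ℕ, ∃ a : Y, a ∈ Q m ∧ (m : ℝ) < |f a| := by
    intro m
    have hFU : IsCompact (⋃ i ∈ Finset.range (m + 1), L i) :=
      (Finset.range (m + 1)).isCompact_biUnion (fun i _ => hLc i)
    obtain ⟨C, hC⟩ := hFU.exists_bound_of_continuousOn hf.continuousOn
    obtain ⟨a, ha, hfa⟩ := hcon (max C m)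
    obtain ⟨n, hn⟩ := mem_iUnion.mp ha
    have hmn : m ≤ n := by
      by_contra hmn
      push_neg at hmn
      have ha' : a ∈ ⋃ i ∈ Finset.range (m + 1), L i :=
        mem_biUnion (Finset.mem_range.mpr (by omega)) hn
      have h1 := hC a ha'
      rw [Real.norm_eq_abs] at h1
      have := lt_of_le_of_lt (le_max_left C (m:ℝ)) hfa
      linarith
    exact ⟨a, hLQ n m hmn hn, lt_of_le_of_lt (le_max_right C (m:ℝ)) hfa⟩
  choose z hzQ hzf using key
  obtain ⟨p, hp⟩ := hq z hzQ
  have hmap : MapClusterPt (f p) atTop (f ∘ z) := by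
    have h1 : ClusterPt (f p) (Filter.map f (Filter.map z atTop)) :=
      hp.map hf.continuousAt tendsto_map
    rwa [Filter.map_map] at h1
  obtain ⟨M₀, hM₀⟩ := exists_nat_ge (|f p| + 1)
  have hfreq := (mapClusterPt_iff_frequently.mp hmap) (Metric.ball (f p) 1)
    (Metric.ball_mem_nhds _ one_pos)
  obtain ⟨m, hmM, hball⟩ := Filter.frequently_atTop.mp hfreq M₀
  have h1 : |f (z m) - f p| < 1 := by
    have := mem_ball_iff_norm.mp hball
    simpa [Real.norm_eq_abs] using this
  have h2 : (m : ℝ) < |f (z m)| := hzf m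
  have h3 : |f (z m)| ≤ |f (z m) - f p| + |f p| := by
    calc |f (z m)| = |(f (z m) - f p) + f p| := by ring_nf
    _ ≤ |f (z m) - f p| + |f p| := abs_add_le _ _
  have h4 : (M₀ : ℝ) ≤ m := Nat.cast_le.mpr hmM
  linarith

/-- Proposition 2.2(a): if `X` is Lindelöf, `Y` a μ-complete q-space and `F` satisfies
(1) and (2), then `F` is monotone set tri-quotient. -/
theorem stmt7 {X : Type u} {Y : Type v} [TopologicalSpace X] [TopologicalSpace Y]
    [T35Space X] [T35Space Y] [LindelofSpace X]
    (hYmu : MuSpace Y) (hYq : QSpace Y)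
    (F : Set X → Set Y) (hFK : ∀ K : Set X, IsCompact K → IsCompact (F K))
    (h1 : CondMonotone F) (h2 : CondCofinal F) :
    CondMonotone F ∧ SetTriQuotient {K : Set X | IsCompact K} F := by
  refine ⟨h1, ?_⟩
  set s : Set X → Set Y := fun U =>
    {y | ∃ V : Set Y, IsOpen V ∧ y ∈ V ∧ ∃ Z : Set X, IsLindelof Z ∧ Z ⊆ U ∧
      ∀ L : Set Y, IsCompact L → L ⊆ V →
        ∃ K : Set X, IsCompact K ∧ K ⊆ Z ∧ L ⊆ F K} with hs
  refine ⟨s, ?_, ?_, ?_, ?_, ?_⟩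
  · -- openness
    intro U _
    rw [isOpen_iff_forall_mem_open]
    rintro y ⟨V, hVo, hyV, Z, hZl, hZU, hcov⟩
    exact ⟨V, fun y' hy' => ⟨V, hVo, hy', Z, hZl, hZU, hcov⟩, hVo, hyV⟩
  · -- str1
    rintro U _ y ⟨V, hVo, hyV, Z, hZl, hZU, hcov⟩
    obtain ⟨K, hKc, hKZ, hLK⟩ := hcov {y} isCompact_singleton
      (singleton_subset_iff.mpr hyV)
    exact mem_iUnion₂.mpr ⟨K, ⟨hKc, hKZ.trans hZU⟩, hLK rfl⟩
  · -- str2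
    apply eq_univ_of_forall
    intro y
    refine ⟨univ, isOpen_univ, mem_univ y, univ, isLindelof_univ, Subset.rfl, ?_⟩
    intro L hL _
    obtain ⟨K, hKc, hLK⟩ := h2 L hL
    exact ⟨K, hKc, subset_univ K, hLK⟩
  · -- str3
    rintro U U' _ _ hUU' y ⟨V, hVo, hyV, Z, hZl, hZU, hcov⟩
    exact ⟨V, hVo, hyV, Z, hZl, hZU.trans hUU', hcov⟩
  · -- str4
    rintro U hU y ⟨V, hVo, hyV, Z, hZl, hZU, hcov⟩ W hWo hWcov
    obtain ⟨K₀, hK₀c, hK₀Z, hyK₀⟩ := hcov {y} isCompact_singleton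
      (singleton_subset_iff.mpr hyV)
    -- every point of Z lies in some member of W
    have hZW : ∀ x ∈ Z, ∃ w ∈ W, x ∈ w := by
      intro x hx
      have hxT : x ∈ ⋃ K ∈ {K | K ∈ {K : Set X | IsCompact K} ∧ y ∈ F K ∧ K ⊆ U}, K := by
        refine mem_iUnion₂.mpr ⟨K₀ ∪ {x}, ⟨?_, ?_, ?_⟩, mem_union_right _ rfl⟩
        · exact hK₀c.union isCompact_singleton
        · exact h1 K₀ (K₀ ∪ {x}) hK₀c (hK₀c.union isCompact_singleton)
            subset_union_left (hyK₀ rfl)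
        · exact union_subset (hK₀Z.trans hZU) (singleton_subset_iff.mpr (hZU hx))
      obtain ⟨w, hwW, hxw⟩ := hWcov hxT
      exact ⟨w, hwW, hxw⟩
    rcases eq_empty_or_nonempty Z with hZe | hZne
    · -- Z empty : take E = ∅
      refine ⟨∅, empty_subset _, finite_empty, V, hVo, hyV, ∅,
        isCompact_empty.isLindelof, by simp, ?_⟩
      intro L hL hLV
      obtain ⟨K, hKc, hKZ, hLK⟩ := hcov L hL hLV
      rw [hZe] at hKZ
      exact ⟨K, hKc, hKZ, hLK⟩
    -- choose for each point of Z an open set with closure inside a member of W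
    have hchoice : ∀ x : Z, ∃ uw : Set X × Set X, IsOpen uw.1 ∧ (x : X) ∈ uw.1 ∧
        uw.2 ∈ W ∧ closure uw.1 ⊆ uw.2 := by
      rintro ⟨x, hx⟩
      obtain ⟨w, hwW, hxw⟩ := hZW x hx
      obtain ⟨Cx, hCx_mem, hCx_closed, hCx_sub⟩ :=
        exists_mem_nhds_isClosed_subset ((hWo w hwW).mem_nhds hxw)
      exact ⟨(interior Cx, w), isOpen_interior, mem_interior_iff_mem_nhds.mpr hCx_mem,
        hwW, (closure_minimal interior_subset hCx_closed).trans hCx_sub⟩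
    choose uw huo hxu hwW hclu using hchoice
    have hZcover : Z ⊆ ⋃ x : Z, (uw x).1 := fun x hx =>
      mem_iUnion.mpr ⟨⟨x, hx⟩, hxu ⟨x, hx⟩⟩
    obtain ⟨r, hrct, hrsub⟩ := hZl.elim_countable_subcover (fun x : Z => (uw x).1)
      (fun x => huo x) hZcover
    have hrne : r.Nonempty := by
      obtain ⟨x₀, hx₀⟩ := hZne
      obtain ⟨i, hir, _⟩ := mem_iUnion₂.mp (hrsub hx₀)
      exact ⟨i, hir⟩
    obtain ⟨g, hg⟩ := hrct.exists_eq_range hrne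
    set v : ℕ → Set X := fun j => (uw (g j)).1 with hv
    have hZv : Z ⊆ ⋃ j, v j := by
      intro x hx
      obtain ⟨i, hir, hxi⟩ := mem_iUnion₂.mp (hrsub hx)
      rw [hg] at hir
      obtain ⟨j, hj⟩ := hir
      exact mem_iUnion.mpr ⟨j, show x ∈ (uw (g j)).1 by rw [hj]; exact hxi⟩
    set D : ℕ → Set X := fun n => ⋃ j ∈ Finset.range (n + 1), closure (v j) with hD
    have hDclosed : ∀ n, IsClosed (D n) :=
      fun n => (Finset.range (n + 1)).finite_toSet.isClosed_biUnion
        (fun j _ => isClosed_closure)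
    -- main claim
    have claim : ∃ n : ℕ, ∃ V' ∈ 𝓝 y, ∀ L : Set Y, IsCompact L → L ⊆ V' →
        ∃ K : Set X, IsCompact K ∧ K ⊆ Z ∩ D n ∧ L ⊆ F K := by
      by_contra hcl
      push_neg at hcl
      obtain ⟨Cy, hCy_mem, hCy_closed, hCy_sub⟩ :=
        exists_mem_nhds_isClosed_subset (hVo.mem_nhds hyV)
      obtain ⟨Q, hQn, hQc⟩ := hYq y
      set R : ℕ → Set Y := fun n => Cy ∩ ⋂ i ∈ Finset.range (n + 1), Q i with hR
      have hRmem : ∀ n, R n ∈ 𝓝 y := by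
        intro n
        exact inter_mem hCy_mem
          ((Filter.biInter_mem (Finset.range (n + 1)).finite_toSet).mpr
            (fun i _ => hQn i))
      have hLn : ∀ n : ℕ, ∃ Ln : Set Y, IsCompact Ln ∧ Ln ⊆ R n ∧
          ∀ K : Set X, IsCompact K → K ⊆ Z ∩ D n → ¬ Ln ⊆ F K :=
        fun n => hcl n (R n) (hRmem n)
      choose Ln hLnc hLnR hLnbad using hLn
      have hbdd : BoundedSubset (⋃ n, Ln n) := by
        refine bounded_iUnion_aux Q hQc Ln hLnc ?_
        intro n i hin x hx
        have hx2 := (hLnR n hx).2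
        exact mem_iInter₂.mp hx2 i (Finset.mem_range.mpr (by omega))
      have hclb : BoundedSubset (closure (⋃ n, Ln n)) := by
        intro f hf
        obtain ⟨M, hM⟩ := hbdd f hf
        refine ⟨M, fun a ha => ?_⟩
        have hsub : (⋃ n, Ln n) ⊆ {x | |f x| ≤ M} := fun x hx => hM x hx
        have hcl : IsClosed {x : Y | |f x| ≤ M} := by
          have : Continuous fun x : Y => |f x| := hf.abs
          exact isClosed_le this continuous_const
        exact closure_minimal hsub hcl ha
      have hMc : IsCompact (closure (⋃ n, Ln n)) := hYmu _ isClosed_closure hclb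
      set M : Set Y := closure (⋃ n, Ln n) ∪ {y} with hMdef
      have hMcpt : IsCompact M := hMc.union isCompact_singleton
      have hMV : M ⊆ V := by
        refine union_subset ?_ (singleton_subset_iff.mpr hyV)
        refine (closure_minimal ?_ hCy_closed).trans hCy_sub
        exact iUnion_subset fun n => (hLnR n).trans inter_subset_left
      obtain ⟨K', hK'c, hK'Z, hMK'⟩ := hcov M hMcpt hMV
      obtain ⟨t, ht⟩ := hK'c.elim_finite_subcover v
        (fun j => huo (g j)) (hK'Z.trans hZv)
      set N : ℕ := t.sup id with hN
      have hK'D : K' ⊆ D N := by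
        intro x hx
        obtain ⟨j, hjt, hxj⟩ := mem_iUnion₂.mp (ht hx)
        refine mem_iUnion₂.mpr ⟨j, ?_, subset_closure hxj⟩
        exact Finset.mem_range.mpr (Nat.lt_succ_of_le (Finset.le_sup (f := id) hjt))
      refine hLnbad N K' hK'c (subset_inter hK'Z hK'D) ?_
      exact ((subset_iUnion Ln N).trans subset_closure).trans
        (subset_union_left.trans hMK')
    obtain ⟨n, V', hV'n, hV'⟩ := claim
    refine ⟨(fun j => (uw (g j)).2) '' (Set.Iic n), ?_, (Set.finite_Iic n).image _, ?_⟩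
    · rintro w ⟨j, _, rfl⟩
      exact hwW (g j)
    · refine ⟨interior V', isOpen_interior, mem_interior_iff_mem_nhds.mpr hV'n,
        Z ∩ D n, hZl.inter_right (hDclosed n), ?_, ?_⟩
      · intro x hx
        obtain ⟨j, hjr, hxj⟩ := mem_iUnion₂.mp hx.2
        exact ⟨(uw (g j)).2, ⟨j, by simpa using Nat.lt_succ_iff.mp (Finset.mem_range.mp hjr), rfl⟩,
          hclu (g j) hxj⟩
      · intro L hL hLV'
        exact hV' L hL (hLV'.trans interior_subset)
end

section
/- Let X be a separable metric space and Y a first countable space. Then every map F : K(X) → K(Y) satisfies condition (3)_c. -/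
open Set Filter Topology

universe u v

lemma aux_compact {Y : Type*} [TopologicalSpace Y] {y : Y} {B : ℕ → Set Y}
    (hB : (nhds y).HasAntitoneBasis B) {L : ℕ → Set Y} (hL : ∀ n, IsCompact (L n))
    (hLB : ∀ n, L n ⊆ B n) : IsCompact ({y} ∪ ⋃ n, L n) := by
  refine isCompact_of_finite_subcover fun {ι} G hG hcov => ?_
  classical
  have hy : y ∈ ⋃ i, G i := hcov (Or.inl rfl)
  obtain ⟨i0, hi0⟩ := mem_iUnion.mp hy
  have hGnhds : G i0 ∈ nhds y := (hG i0).mem_nhds hi0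
  obtain ⟨m, -, hm⟩ := hB.1.mem_iff.mp hGnhds
  have hC : IsCompact (⋃ n ∈ Finset.range m, L n) :=
    (Finset.range m).isCompact_biUnion (fun n _ => hL n)
  have hCcov : (⋃ n ∈ Finset.range m, L n) ⊆ ⋃ i, G i := by
    refine Set.iUnion₂_subset fun n _ x hx => hcov (Or.inr (mem_iUnion.mpr ⟨n, hx⟩))
  obtain ⟨t, ht⟩ := hC.elim_finite_subcover G hG hCcov
  refine ⟨insert i0 t, fun x hx => ?_⟩
  rcases hx with rfl | hx
  · exact mem_iUnion₂.mpr ⟨i0, Finset.mem_insert_self _ _, hi0⟩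
  · obtain ⟨n, hn⟩ := mem_iUnion.mp hx
    rcases lt_or_ge n m with h | h
    · have := ht (mem_iUnion₂.mpr ⟨n, Finset.mem_range.mpr h, hn⟩)
      obtain ⟨i, hi, hxi⟩ := mem_iUnion₂.mp this
      exact mem_iUnion₂.mpr ⟨i, Finset.mem_insert_of_mem hi, hxi⟩
    · exact mem_iUnion₂.mpr ⟨i0, Finset.mem_insert_self _ _,
        hm (hB.2 h (hLB n hn))⟩

/-- Proposition 2.2(b), first part: if `X` is separable metric and `Y` first countable,
then every `F : K(X) → K(Y)` satisfies condition (3)_c. -/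
theorem stmt8 {X : Type u} {Y : Type v} [MetricSpace X] [TopologicalSpace.SeparableSpace X]
    [TopologicalSpace Y] [T35Space Y] [FirstCountableTopology Y]
    (F : Set X → Set Y) (hFK : ∀ K : Set X, IsCompact K → IsCompact (F K)) :
    Cond3c F := by
  intro U V hU hV hUne hVne hcov W hW hWcov y hy
  have : SecondCountableTopology X := UniformSpace.secondCountable_of_separable X
  by_contra hcon
  push_neg at hcon
  -- countable subcover of U from W
  obtain ⟨T, hTc, hTW, hTu⟩ := TopologicalSpace.isOpen_sUnion_countable W hW
  have hUT : U ⊆ ⋃₀ T := hTu ▸ hWcov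
  have hTne : T.Nonempty := by
    rcases hUne with ⟨x, hx⟩
    obtain ⟨t, ht, -⟩ := hUT hx
    exact ⟨t, ht⟩
  obtain ⟨f, hf⟩ := hTc.exists_eq_range hTne
  -- antitone neighborhood basis at y
  obtain ⟨B, hB⟩ := (nhds y).exists_antitone_basis
  -- failure at each stage n
  have hVy : V ∈ nhds y := hV.mem_nhds hy
  have key : ∀ n : ℕ, ∃ L : Set Y, IsCompact L ∧ L.Countable ∧ L ⊆ B n ∩ V ∧
      ∀ K : Set X, IsCompact K → K ⊆ ⋃₀ (f '' Set.Iic n) → ¬ L ⊆ F K := by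
    intro n
    have hE : (f '' Set.Iic n) ⊆ W := by
      rintro _ ⟨i, -, rfl⟩
      exact hTW (hf ▸ Set.mem_range_self i)
    have hEfin : (f '' Set.Iic n).Finite := (Set.finite_Iic n).image f
    have hBV : B n ∩ V ∈ nhds y := Filter.inter_mem (hB.1.mem_of_mem trivial) hVy
    obtain ⟨L, hL1, hL2, hL3, hL4⟩ := hcon _ hE hEfin _ hBV
    exact ⟨L, hL1, hL2, hL3, fun K hK hKE hLF => hL4 K hK hKE hLF⟩
  choose L hLc hLct hLsub hLbad using key
  -- the big compact countable set
  set Lbig : Set Y := {y} ∪ ⋃ n, L n with hLbig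
  have hLbigc : IsCompact Lbig :=
    aux_compact hB hLc (fun n => (hLsub n).trans Set.inter_subset_left)
  have hLbigct : Lbig.Countable :=
    (Set.countable_singleton y).union (Set.countable_iUnion hLct)
  have hLbigV : Lbig ⊆ V := by
    rintro x (rfl | hx)
    · exact hy
    · obtain ⟨n, hn⟩ := mem_iUnion.mp hx
      exact (hLsub n hn).2
  obtain ⟨K, hKc, hKU, hKF⟩ := hcov Lbig hLbigc hLbigct hLbigV
  -- K is compact, covered by the w's
  have hKcov : K ⊆ ⋃ i, f i := by
    intro x hx
    obtain ⟨t, ht, hxt⟩ := hUT (hKU hx)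
    rw [hf] at ht
    obtain ⟨i, rfl⟩ := ht
    exact mem_iUnion.mpr ⟨i, hxt⟩
  obtain ⟨t, ht⟩ := hKc.elim_finite_subcover f
    (fun i => hW _ (hTW (hf ▸ Set.mem_range_self i))) hKcov
  -- take n = max of t
  obtain ⟨n, hn⟩ : ∃ n : ℕ, ∀ i ∈ t, i ≤ n := ⟨t.sup id, fun i hi => Finset.le_sup (f := id) hi⟩
  refine hLbad n K hKc ?_ ?_
  · intro x hx
    obtain ⟨i, hi, hxi⟩ := mem_iUnion₂.mp (ht hx)
    exact ⟨f i, ⟨i, hn i hi, rfl⟩, hxi⟩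
  · exact fun x hx => hKF (Or.inr (mem_iUnion.mpr ⟨n, hx⟩))
end

section
/- Let X be a separable metric space, Y a first countable space, and F : K(X) → K(Y) a map satisfying conditions (1) and (2)_c. Then F is a monotone set tri-quotient map. -/
open Set Filter Topology

universe u v

lemma compact_insert_union {Y : Type v} [TopologicalSpace Y] (y : Y) (V : ℕ → Set Y)
    (hmono : Antitone V)
    (hbasis : ∀ O ∈ nhds y, ∃ n, V n ⊆ O)
    (L : ℕ → Set Y) (hLc : ∀ n, IsCompact (L n)) (hLV : ∀ n, L n ⊆ V n) :
    IsCompact (insert y (⋃ n, L n)) := by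
  rw [isCompact_iff_ultrafilter_le_nhds]
  intro f hf
  by_cases h : ∃ n, (L n : Set Y) ∈ f
  · obtain ⟨n, hn⟩ := h
    obtain ⟨p, hp, hle⟩ := (isCompact_iff_ultrafilter_le_nhds.mp (hLc n)) f
      (le_principal_iff.mpr hn)
    exact ⟨p, Or.inr (mem_iUnion.mpr ⟨n, hp⟩), hle⟩
  · push_neg at h
    refine ⟨y, Or.inl rfl, fun O hO => ?_⟩
    obtain ⟨n, hn⟩ := hbasis O hO
    have hyO : y ∈ O := mem_of_mem_nhds hO
    have h1 : insert y (⋃ m, L m) ∈ f := le_principal_iff.mp hf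
    have h3 : (insert y (⋃ m, L m)) ∩ ⋂ m ∈ Finset.range n, (L m)ᶜ ∈ f := by
      refine Filter.inter_mem h1 ((Filter.biInter_finset_mem _).mpr fun m _ => ?_)
      exact (Ultrafilter.compl_mem_iff_notMem).mpr (h m)
    refine Filter.mem_of_superset h3 ?_
    rintro z ⟨hz1, hz2⟩
    simp only [Finset.mem_range, mem_iInter, mem_compl_iff] at hz2
    rcases hz1 with rfl | hz1
    · exact hyO
    · obtain ⟨m, hm⟩ := mem_iUnion.mp hz1
      by_cases hmn : m < n
      · exact absurd hm (hz2 m hmn)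
      · exact hn (hmono (le_of_not_gt hmn) (hLV m hm))

/-- Proposition 2.2(b), second part: if `X` is separable metric, `Y` first countable
and `F` satisfies (1) and (2)_c, then `F` is monotone set tri-quotient. -/
theorem stmt9 {X : Type u} {Y : Type v} [MetricSpace X] [TopologicalSpace.SeparableSpace X]
    [TopologicalSpace Y] [T35Space Y] [FirstCountableTopology Y]
    (F : Set X → Set Y) (hFK : ∀ K : Set X, IsCompact K → IsCompact (F K))
    (h1 : CondMonotone F) (h2 : CondCofinalCtble F) :
    CondMonotone F ∧ SetTriQuotient {K : Set X | IsCompact K} F := by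
  classical
  haveI : SecondCountableTopology X := UniformSpace.secondCountable_of_separable X
  refine ⟨h1, ?_⟩
  set s : Set X → Set Y := fun U => {y | ∃ V ∈ nhds y, ∀ L : Set Y, IsCompact L →
    L.Countable → L ⊆ V → ∃ K, IsCompact K ∧ K ⊆ U ∧ L ⊆ F K} with hs
  have hmono : ∀ U U' : Set X, U ⊆ U' → s U ⊆ s U' := by
    rintro U U' hUU y ⟨V, hV, hcov⟩
    exact ⟨V, hV, fun L hL hLc hLV =>
      let ⟨K, hK, hKU, hLF⟩ := hcov L hL hLc hLV
      ⟨K, hK, hKU.trans hUU, hLF⟩⟩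
  have hopen : ∀ U, IsOpen (s U) := by
    intro U
    rw [isOpen_iff_mem_nhds]
    rintro y ⟨V, hV, hcov⟩
    obtain ⟨O, hOV, hOopen, hyO⟩ := mem_nhds_iff.mp hV
    refine Filter.mem_of_superset (hOopen.mem_nhds hyO) fun y' hy' => ?_
    exact ⟨O, hOopen.mem_nhds hy', fun L hL hLc hLV => hcov L hL hLc (hLV.trans hOV)⟩
  refine ⟨s, fun U _ => hopen U, ?_, ?_, fun U V _ _ h => hmono U V h, ?_⟩
  · rintro U _ y ⟨V, hV, hcov⟩
    obtain ⟨K, hK, hKU, hyF⟩ := hcov {y} isCompact_singleton (countable_singleton y)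
      (singleton_subset_iff.mpr (mem_of_mem_nhds hV))
    exact mem_biUnion ⟨hK, hKU⟩ (hyF rfl)
  · ext y
    simp only [mem_univ, iff_true]
    exact ⟨univ, univ_mem, fun L hL hLc _ =>
      let ⟨K, hK, hLF⟩ := h2 L hL hLc
      ⟨K, hK, subset_univ K, hLF⟩⟩
  · intro U hU y hy W hW hcov
    obtain ⟨V, hV, hVcov⟩ := hy
    set T : Set X := ⋃ K ∈ {K : Set X | K ∈ {K : Set X | IsCompact K} ∧ y ∈ F K ∧ K ⊆ U}, K
      with hT
    -- countable subcover of T from W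
    have hTlin : IsLindelof T := HereditarilyLindelof_LindelofSets T
    have hTcov : T ⊆ ⋃ w ∈ W, w := by rwa [← sUnion_eq_biUnion]
    obtain ⟨𝒱, h𝒱W, h𝒱c, h𝒱cov⟩ := hTlin.elim_countable_subcover_image
      (fun w hw => hW w hw) hTcov
    by_cases h𝒱ne : 𝒱.Nonempty
    · obtain ⟨g, hg⟩ := h𝒱c.exists_eq_range h𝒱ne
      have hgW : ∀ n, g n ∈ W := fun n => h𝒱W (hg ▸ mem_range_self n)
      -- antitone neighborhood basis inside V
      obtain ⟨B, hB⟩ := (nhds y).exists_antitone_basis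
      set Vn : ℕ → Set Y := fun n => B n ∩ V with hVn
      have hVnmem : ∀ n, Vn n ∈ nhds y := fun n =>
        Filter.inter_mem (hB.1.mem_of_mem trivial) hV
      have hVnmono : Antitone Vn := fun m n hmn =>
        inter_subset_inter_left V (hB.2 hmn)
      have hVnbasis : ∀ O ∈ nhds y, ∃ n, Vn n ⊆ O := by
        intro O hO
        obtain ⟨n, -, hn⟩ := hB.1.mem_iff.mp hO
        exact ⟨n, (inter_subset_left).trans hn⟩
      by_contra hcon
      push_neg at hcon
      -- for each n, the finite union G n fails
      have hfail : ∀ n : ℕ, ∃ L : Set Y, IsCompact L ∧ L.Countable ∧ L ⊆ Vn n ∧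
          ¬∃ K, IsCompact K ∧ K ⊆ ⋃₀ (g '' {m | m ≤ n}) ∧ L ⊆ F K := by
        intro n
        have hE : y ∉ s (⋃₀ (g '' {m | m ≤ n})) :=
          hcon (g '' {m | m ≤ n})
            (fun w hw => by obtain ⟨m, -, rfl⟩ := hw; exact hgW m)
            ((finite_Iic n).image g)
        simp only [hs, mem_setOf_eq, not_exists] at hE
        have := hE (Vn n)
        push_neg at this
        obtain ⟨L, hL1, hL2, hL3, hL4⟩ := this (hVnmem n)
        exact ⟨L, hL1, hL2, hL3, fun ⟨K, hK1, hK2, hK3⟩ => hL4 K hK1 hK2 hK3⟩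
      choose L hLcpt hLctble hLVn hLbad using hfail
      -- the combined set
      set Lbig : Set Y := insert y (⋃ n, L n) with hLbig
      have hLbigcpt : IsCompact Lbig :=
        compact_insert_union y Vn hVnmono hVnbasis L hLcpt hLVn
      have hLbigctble : Lbig.Countable :=
        (Set.countable_iUnion hLctble).insert y
      have hLbigV : Lbig ⊆ V := by
        rintro z (rfl | hz)
        · exact mem_of_mem_nhds hV
        · obtain ⟨n, hn⟩ := mem_iUnion.mp hz
          exact (inter_subset_right) (hLVn n hn)
      obtain ⟨K, hKcpt, hKU, hLbigF⟩ := hVcov Lbig hLbigcpt hLbigctble hLbigV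
      have hyFK : y ∈ F K := hLbigF (mem_insert y _)
      have hKT : K ⊆ T := subset_biUnion_of_mem (u := fun K => K) ⟨hKcpt, hyFK, hKU⟩
      have hKcov : K ⊆ ⋃ n, g n := by
        refine hKT.trans (h𝒱cov.trans ?_)
        rw [hg, biUnion_range]
      obtain ⟨t, ht⟩ := hKcpt.elim_finite_subcover g
        (fun n => (hW _ (hgW n)).mono rfl.le) hKcov
      set N : ℕ := t.sup id with hN
      have hKN : K ⊆ ⋃₀ (g '' {m | m ≤ N}) := by
        refine ht.trans ?_
        intro x hx
        obtain ⟨n, hn⟩ := mem_iUnion.mp hx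
        obtain ⟨hnt, hxg⟩ := mem_iUnion.mp hn
        exact ⟨g n, mem_image_of_mem g (Finset.le_sup (f := id) hnt), hxg⟩
      exact hLbad N ⟨K, hKcpt, hKN, fun z hz => hLbigF (mem_insert_of_mem y (mem_iUnion.mpr ⟨N, hz⟩))⟩
    · -- 𝒱 empty, so T = ∅
      have hTempty : T ⊆ ∅ := by
        refine h𝒱cov.trans ?_
        rw [not_nonempty_iff_eq_empty.mp h𝒱ne]
        simp
      refine ⟨∅, empty_subset W, finite_empty, V, hV, ?_⟩
      intro L hL hLc hLV
      have hins : insert y L ⊆ V := insert_subset (mem_of_mem_nhds hV) hLV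
      obtain ⟨K, hKcpt, hKU, hLF⟩ := hVcov (insert y L) (hL.insert y)
        (hLc.insert y) hins
      have hyFK : y ∈ F K := hLF (mem_insert y L)
      have hKT : K ⊆ T := subset_biUnion_of_mem (u := fun K => K) ⟨hKcpt, hyFK, hKU⟩
      refine ⟨K, hKcpt, ?_, fun z hz => hLF (mem_insert_of_mem y hz)⟩
      rw [sUnion_empty]
      exact hKT.trans hTempty
end
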